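/- arXiv:2510.08209 — 3 statements merged into one kernel-verified Lean document; each statement's English description precedes it below -/
import Mathlib

section
/- The group W = Z/2 ⋉ Z² (where the nontrivial element of Z/2 acts on Z² by negation) admits the presentation ⟨σ₁, σ₂, σ₃ | σ₁² = σ₂² = σ₃² = (σ₁σ₂σ₃)² = 1⟩. -/
/- The inversion automorphism of a commutative group. -/
def negAut (A : Type*) [CommGroup A] : MulAut A := MulEquiv.inv A

/-- The action of `ℤ/2` on a commutative group `A` where the nontrivial element acts by
inversion (i.e. by negation, written additively). -/
def negPhi (A : Type*) [CommGroup A] : Multiplicative (ZMod 2) →* MulAut A where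
  toFun a := (negAut A) ^ (Multiplicative.toAdd a).val
  map_one' := by simp
  map_mul' a b := by
    have h2 : (negAut A) ^ 2 = 1 := by
      ext x
      simp [negAut, pow_two]
    show negAut A ^ (Multiplicative.toAdd (a * b)).val
        = negAut A ^ (Multiplicative.toAdd a).val * negAut A ^ (Multiplicative.toAdd b).val
    rw [toAdd_mul, ZMod.val_add, ← pow_eq_pow_mod _ h2, pow_add]

/-- The group `W = ℤ/2 ⋉ ℤ²`, where the nontrivial element of `ℤ/2` acts on `ℤ²` by
negation. -/
abbrev W0 : Type :=
  SemidirectProduct (Multiplicative (ℤ × ℤ)) (Multiplicative (ZMod 2))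
    (negPhi (Multiplicative (ℤ × ℤ)))

/-- The relations `σ₁² = σ₂² = σ₃² = (σ₁σ₂σ₃)² = 1`. -/
def rels0 : Set (FreeGroup (Fin 3)) :=
  {FreeGroup.of 0 ^ 2, FreeGroup.of 1 ^ 2, FreeGroup.of 2 ^ 2,
    (FreeGroup.of 0 * FreeGroup.of 1 * FreeGroup.of 2) ^ 2}

/-!
The reflections `σᵢ = (-1 | tᵢ)` are involutions, and so is `σ₁σ₂σ₃ = (-1 | e₂ - e₁)`; hence
`σᵢ ↦ σᵢ` defines a homomorphism from the presented group to `W`. Conversely, for involutions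
`a, b, c` with `(abc)² = 1` we have `abc = cba`, so the "translations" `ba` and `ca` commute, and
conjugation by `a` inverts both. This is exactly the data of a homomorphism out of
`ℤ² ⋊ ℤ/2`, and the two maps are inverse to each other on generators.
-/

open Multiplicative SemidirectProduct

section CyclicHoms

variable {M : Type*} [Monoid M]

theorem MonoidHom.ext_mzmod {n : ℕ} [NeZero n] ⦃f g : Multiplicative (ZMod n) →* M⦄
    (h : f (ofAdd 1) = g (ofAdd 1)) : f = g := by
  refine MonoidHom.ext fun x => ?_
  have hx : x = ofAdd (1 : ZMod n) ^ (toAdd x).val := by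
    apply toAdd.injective
    simp
  rw [hx, map_pow, map_pow, h]

def powZModHom {n : ℕ} [NeZero n] (a : M) (ha : a ^ n = 1) : Multiplicative (ZMod n) →* M where
  toFun x := a ^ x.toAdd.val
  map_one' := by simp
  map_mul' x y := by
    simp only [toAdd_mul, ZMod.val_add, ← pow_add]
    exact (pow_eq_pow_mod _ ha).symm

@[simp]
theorem powZModHom_ofAdd_one (a : M) (ha : a ^ 2 = 1) : powZModHom a ha (ofAdd 1) = a :=
  pow_one a

end CyclicHoms

section LatticeHoms

variable {G : Type*} [Group G]

theorem MonoidHom.ext_mint_prod ⦃f g : Multiplicative (ℤ × ℤ) →* G⦄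
    (h₁ : f (ofAdd (1, 0)) = g (ofAdd (1, 0))) (h₂ : f (ofAdd (0, 1)) = g (ofAdd (0, 1))) :
    f = g := by
  refine MonoidHom.ext fun p => ?_
  have hp : p = ofAdd (1, 0) ^ (toAdd p).1 * ofAdd (0, 1) ^ (toAdd p).2 := by
    apply toAdd.injective
    simp
  rw [hp, map_mul, map_mul, map_zpow, map_zpow, map_zpow, map_zpow, h₁, h₂]

def zpowersPairHom (x y : G) (h : Commute x y) : Multiplicative (ℤ × ℤ) →* G where
  toFun p := x ^ (toAdd p).1 * y ^ (toAdd p).2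
  map_one' := by simp
  map_mul' p q := by
    simp only [toAdd_mul, Prod.fst_add, Prod.snd_add, zpow_add]
    exact (h.zpow_zpow _ _).mul_mul_mul_comm _ _

@[simp]
theorem zpowersPairHom_ofAdd_one_zero (x y : G) (h : Commute x y) :
    zpowersPairHom x y h (ofAdd (1, 0)) = x := by
  simp [zpowersPairHom]

@[simp]
theorem zpowersPairHom_ofAdd_zero_one (x y : G) (h : Commute x y) :
    zpowersPairHom x y h (ofAdd (0, 1)) = y := by
  simp [zpowersPairHom]

theorem conj_zpowersPairHom {x y a : G} (h : Commute x y) (hx : a * x * a⁻¹ = x⁻¹)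
    (hy : a * y * a⁻¹ = y⁻¹) (n : Multiplicative (ℤ × ℤ)) :
    a * zpowersPairHom x y h n * a⁻¹ = zpowersPairHom x y h n⁻¹ := by
  have hconj : (MulAut.conj a).toMonoidHom.comp (zpowersPairHom x y h) =
      (zpowersPairHom x y h).comp invMonoidHom :=
    MonoidHom.ext_mint_prod (by simp [hx]) (by simp [hy])
  exact DFunLike.congr_fun hconj n

end LatticeHoms

section GeneralizedDihedral

variable {N : Type*} [CommGroup N]

@[simp]
theorem negPhi_ofAdd_one_apply (n : N) : negPhi N (ofAdd 1) n = n⁻¹ := rfl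

theorem inr_ofAdd_one_sq : (inr (ofAdd 1) : N ⋊[negPhi N] Multiplicative (ZMod 2)) ^ 2 = 1 := by
  rw [← map_pow]
  exact map_one _

theorem inl_mul_inr_mul_inl_mul_inr (n m : N) :
    (inl n * inr (ofAdd 1) : N ⋊[negPhi N] Multiplicative (ZMod 2)) * (inl m * inr (ofAdd 1)) =
      inl (n * m⁻¹) := by
  ext
  · simp
  · simp only [mul_right, right_inl, right_inr, one_mul]
    rfl

theorem inl_mul_inr_sq (n : N) :
    (inl n * inr (ofAdd 1) : N ⋊[negPhi N] Multiplicative (ZMod 2)) ^ 2 = 1 := by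
  rw [sq, inl_mul_inr_mul_inl_mul_inr, mul_inv_cancel, map_one]

variable {G : Type*} [Group G]

def liftNegPhi (f : N →* G) (a : G) (ha : a ^ 2 = 1) (hf : ∀ n, a * f n * a⁻¹ = f n⁻¹) :
    N ⋊[negPhi N] Multiplicative (ZMod 2) →* G :=
  lift f (powZModHom a ha) fun g => by
    obtain rfl | rfl : g = 1 ∨ g = ofAdd 1 := by
      revert g
      decide
    · ext n
      simp
    · ext n
      simp [hf]

@[simp]
theorem liftNegPhi_inl (f : N →* G) (a : G) (ha : a ^ 2 = 1) (hf : ∀ n, a * f n * a⁻¹ = f n⁻¹)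
    (n : N) : liftNegPhi f a ha hf (inl n) = f n :=
  lift_inl _ _ _ n

@[simp]
theorem liftNegPhi_inr_ofAdd_one (f : N →* G) (a : G) (ha : a ^ 2 = 1)
    (hf : ∀ n, a * f n * a⁻¹ = f n⁻¹) : liftNegPhi f a ha hf (inr (ofAdd 1)) = a := by
  simp [liftNegPhi]

end GeneralizedDihedral

section Involutions

variable {G : Type*} [Group G] {a b c : G}

theorem inv_eq_self_of_sq_eq_one (ha : a ^ 2 = 1) : a⁻¹ = a :=
  inv_eq_of_mul_eq_one_right (sq a ▸ ha)

theorem mul_mul_inv_eq_inv_of_sq_eq_one (ha : a ^ 2 = 1) (hb : b ^ 2 = 1) :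
    a * (b * a) * a⁻¹ = (b * a)⁻¹ := by
  calc a * (b * a) * a⁻¹ = a * b := by group
    _ = a⁻¹ * b⁻¹ := by rw [inv_eq_self_of_sq_eq_one ha, inv_eq_self_of_sq_eq_one hb]
    _ = (b * a)⁻¹ := (mul_inv_rev b a).symm

theorem commute_mul_mul_of_sq_eq_one (ha : a ^ 2 = 1) (hb : b ^ 2 = 1) (hc : c ^ 2 = 1)
    (habc : (a * b * c) ^ 2 = 1) : Commute (b * a) (c * a) := by
  have hcc : c * c = 1 := sq c ▸ hc
  have hcba : c * b * a = a * b * c := by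
    calc c * b * a = c⁻¹ * b⁻¹ * a⁻¹ := by
          rw [inv_eq_self_of_sq_eq_one ha, inv_eq_self_of_sq_eq_one hb,
            inv_eq_self_of_sq_eq_one hc]
      _ = (a * b * c)⁻¹ := by group
      _ = a * b * c := inv_eq_self_of_sq_eq_one habc
  calc b * a * (c * a) = (c * c) * (b * a * c) * a := by rw [hcc, one_mul]; group
    _ = c * (c * b * a) * c * a := by group
    _ = c * (a * b * c) * c * a := by rw [hcba]
    _ = c * a * b * (c * c) * a := by group
    _ = c * a * (b * a) := by rw [hcc, mul_one]; group

end Involutions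

-- `σ₁, σ₂, σ₃ = (-1 | 0), (-1 | e₁), (-1 | e₂)`
def reflection : Fin 3 → W0 :=
  ![inl 1 * inr (ofAdd 1), inl (ofAdd (1, 0)) * inr (ofAdd 1), inl (ofAdd (0, 1)) * inr (ofAdd 1)]

theorem reflection_rels : ∀ r ∈ rels0, FreeGroup.lift reflection r = 1 := by
  rintro r (rfl | rfl | rfl | rfl) <;>
    simp only [map_pow, map_mul, FreeGroup.lift_apply_of, reflection, Matrix.cons_val]
  case inr.inr.inr =>
    rw [inl_mul_inr_mul_inl_mul_inr, ← mul_assoc, ← map_mul]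
    exact inl_mul_inr_sq _
  all_goals exact inl_mul_inr_sq _

noncomputable def toW0 : PresentedGroup rels0 →* W0 := PresentedGroup.toGroup reflection_rels

@[simp]
theorem toW0_of (i : Fin 3) : toW0 (PresentedGroup.of i) = reflection i :=
  PresentedGroup.toGroup.of reflection_rels

section Presentation

local notation "σ" => (PresentedGroup.of : Fin 3 → PresentedGroup rels0)

theorem rels0_of_sq (i : Fin 3) : σ i ^ 2 = 1 := by
  have hi : FreeGroup.of i ^ 2 ∈ rels0 := by fin_cases i <;> simp [rels0]
  have h := PresentedGroup.one_of_mem hi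
  rw [map_pow] at h
  exact h

theorem rels0_of_mul_of_mul_of_sq : (σ 0 * σ 1 * σ 2) ^ 2 = 1 := by
  have h := PresentedGroup.one_of_mem
    (show (FreeGroup.of 0 * FreeGroup.of 1 * FreeGroup.of 2) ^ 2 ∈ rels0 by simp [rels0])
  rw [map_pow, map_mul, map_mul] at h
  exact h

noncomputable def translationHom : Multiplicative (ℤ × ℤ) →* PresentedGroup rels0 :=
  zpowersPairHom (σ 1 * σ 0) (σ 2 * σ 0)
    (commute_mul_mul_of_sq_eq_one (rels0_of_sq 0) (rels0_of_sq 1) (rels0_of_sq 2)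
      rels0_of_mul_of_mul_of_sq)

noncomputable def ofW0 : W0 →* PresentedGroup rels0 :=
  liftNegPhi translationHom (σ 0) (rels0_of_sq 0) <|
    conj_zpowersPairHom _ (mul_mul_inv_eq_inv_of_sq_eq_one (rels0_of_sq 0) (rels0_of_sq 1))
      (mul_mul_inv_eq_inv_of_sq_eq_one (rels0_of_sq 0) (rels0_of_sq 2))

@[simp]
theorem ofW0_inl (n : Multiplicative (ℤ × ℤ)) : ofW0 (inl n) = translationHom n :=
  liftNegPhi_inl ..

@[simp]
theorem ofW0_inr_ofAdd_one : ofW0 (inr (ofAdd 1)) = σ 0 :=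
  liftNegPhi_inr_ofAdd_one ..

theorem ofW0_comp_toW0 : ofW0.comp toW0 = MonoidHom.id _ := by
  refine PresentedGroup.ext fun i => ?_
  fin_cases i <;> simp [reflection, translationHom, mul_assoc, ← sq, rels0_of_sq]

theorem toW0_comp_ofW0 : toW0.comp ofW0 = MonoidHom.id _ := by
  refine hom_ext (MonoidHom.ext_mint_prod ?_ ?_) (MonoidHom.ext_mzmod ?_) <;>
    simp [translationHom, reflection, mul_assoc, ← sq, inr_ofAdd_one_sq]

end Presentation

/-- The group `W = ℤ/2 ⋉ ℤ²` admits the presentation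
`⟨σ₁, σ₂, σ₃ | σ₁² = σ₂² = σ₃² = (σ₁σ₂σ₃)² = 1⟩`. -/
theorem stmt0 : Nonempty (PresentedGroup rels0 ≃* W0) :=
  ⟨MonoidHom.toMulEquiv toW0 ofW0 ofW0_comp_toW0 toW0_comp_ofW0⟩
end

section
/- With σ₁,...,σ_{n+2} as in the reflection generating set of [G(2,1,n)]₁^α acting affinely on C^n, the element σ₁σ₂⋯σ_{n+2}σ_n σ_{n-1}⋯σ₂ equals the affine map with linear part diag(-1,1,...,1) permuted so that it acts as (x₁,...,x_n) ↦ (-x₁ + (α-1), x₂,...,x_n) up to coordinate relabeling, and in particular (σ₁⋯σ_{n+2}σ_n⋯σ₂)² = 1. -/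
noncomputable section

/-- The coordinate permutation of `ℂⁿ` induced by a permutation of the indices
(a permutation matrix, viewed as a map of `ℂⁿ`). -/
def coordPerm {n : ℕ} (e : Equiv.Perm (Fin n)) : Equiv.Perm (Fin n → ℂ) :=
  Equiv.arrowCongr e (Equiv.refl ℂ)

/-- The affine reflection `x ↦ (x₁, …, c - xₖ, …, xₙ)` of `ℂⁿ`, flipping the sign of the
`k`-th coordinate and translating it by `c`. -/
def flipPerm {n : ℕ} (k : Fin n) (c : ℂ) : Equiv.Perm (Fin n → ℂ) where
  toFun x := Function.update x k (c - x k)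
  invFun x := Function.update x k (c - x k)
  left_inv x := by
    funext i
    rcases eq_or_ne i k with rfl | h
    · simp
    · simp [Function.update_of_ne h]
  right_inv x := by
    funext i
    rcases eq_or_ne i k with rfl | h
    · simp
    · simp [Function.update_of_ne h]

/-- The generating reflections `σ₁, …, σ_{n+2}` of `[G(2,1,n)]₁^α`, acting affinely on
`ℂⁿ`: `σ₁ = diag(-1,1,…,1)`, `σᵢ` the permutation matrix `(i-1, i)` for `2 ≤ i ≤ n`,
`σ_{n+1} = (diag(1,…,1,-1) | eₙ)` and `σ_{n+2} = (diag(1,…,1,-1) | α eₙ)`. -/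
def sigC (n : ℕ) (α : ℂ) (i : ℕ) : Equiv.Perm (Fin n → ℂ) :=
  if h1 : i = 1 ∧ 0 < n then flipPerm ⟨0, h1.2⟩ 0
  else if h2 : 2 ≤ i ∧ i ≤ n then
    coordPerm (Equiv.swap ⟨i - 2, by omega⟩ ⟨i - 1, by omega⟩)
  else if h3 : i = n + 1 ∧ 0 < n then flipPerm ⟨n - 1, by omega⟩ 1
  else if h4 : i = n + 2 ∧ 0 < n then flipPerm ⟨n - 1, by omega⟩ α
  else 1

/-- An affine reflection of `ℂⁿ`: a transformation `x ↦ Ax + t` whose linear part `A` is a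
nontrivial finite-order linear map fixing a hyperplane pointwise. -/
def IsAffineReflection (n : ℕ) (w : Equiv.Perm (Fin n → ℂ)) : Prop :=
  ∃ (A : (Fin n → ℂ) ≃ₗ[ℂ] (Fin n → ℂ)) (t : Fin n → ℂ),
    (∀ x, w x = A x + t) ∧
    A ≠ LinearEquiv.refl ℂ (Fin n → ℂ) ∧
    IsOfFinOrder A ∧
    Module.finrank ℂ
      (LinearMap.ker ((A : (Fin n → ℂ) →ₗ[ℂ] (Fin n → ℂ)) - LinearMap.id)) = n - 1

/-- The group `[G(2,1,n)]₁^α`, realized as the group of affine transformations of `ℂⁿ`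
generated by the reflections `σ₁, …, σ_{n+2}`. -/
def WG21n (n : ℕ) (α : ℂ) : Subgroup (Equiv.Perm (Fin n → ℂ)) :=
  Subgroup.closure (sigC n α '' Set.Icc 1 (n + 2))

/-!
The word σ₂⋯σₙ is the coordinate permutation by the cycle `Fin.cycleRange ⟨n - 1, _⟩`
= (0 1 ⋯ n-1), and σₙ⋯σ₂ is its inverse because every σᵢ is an involution. Conjugating by
this cycle carries the reflections σ_{n+1}, σ_{n+2} of the last coordinate to the corresponding
reflections of the first one, and three point reflections `x ↦ a - x`, `x ↦ b - x`, `x ↦ c - x`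
of a line compose to the point reflection `x ↦ (a - b + c) - x`; here `a = 0`, `b = 1`, `c = α`.
-/

theorem Fin.coe_cycleRange {n : ℕ} (i j : Fin n) :
    (Fin.cycleRange i j : ℕ) = if j < i then (j : ℕ) + 1 else if j = i then 0 else j := by
  rcases le_or_gt j i with h | h
  · rw [Fin.coe_cycleRange_of_le h]
    split_ifs <;> first | rfl | omega
  · rw [Fin.cycleRange_of_gt h, if_neg (not_lt.mpr h.le), if_neg h.ne']

theorem Fin.cycleRange_mk_succ {n k : ℕ} (h : k + 1 < n) :
    Fin.cycleRange (⟨k + 1, h⟩ : Fin n) =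
      Fin.cycleRange ⟨k, by omega⟩ * Equiv.swap ⟨k, by omega⟩ ⟨k + 1, h⟩ := by
  ext j
  simp only [Equiv.Perm.mul_apply, Equiv.swap_apply_def, apply_ite Fin.val,
    Fin.coe_cycleRange, Fin.ext_iff, Fin.lt_def]
  split_ifs <;> omega

lemma List.range'_one_eq_cons_append {n : ℕ} (hn : 0 < n) :
    List.range' 1 (n + 2) = 1 :: (List.range' 2 (n - 1) ++ [n + 1, n + 2]) := by
  nth_rw 1 [show n + 2 = n - 1 + 1 + 1 + 1 by omega]
  rw [List.range'_succ, List.range'_concat, List.range'_concat, List.append_assoc,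
    List.singleton_append]
  grind

section

variable {n : ℕ}

lemma coordPerm_apply (e : Equiv.Perm (Fin n)) (x : Fin n → ℂ) (i : Fin n) :
    coordPerm e x i = x (e.symm i) :=
  rfl

lemma coordPerm_symm_apply (e : Equiv.Perm (Fin n)) (x : Fin n → ℂ) (i : Fin n) :
    (coordPerm e).symm x i = x (e i) :=
  rfl

lemma flipPerm_apply (k : Fin n) (c : ℂ) (x : Fin n → ℂ) :
    flipPerm k c x = Function.update x k (c - x k) :=
  rfl

lemma coordPerm_mul (e f : Equiv.Perm (Fin n)) :
    coordPerm (e * f) = coordPerm e * coordPerm f :=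
  rfl

lemma coordPerm_mul_flipPerm_mul_inv (e : Equiv.Perm (Fin n)) (k : Fin n) (c : ℂ) :
    coordPerm e * flipPerm k c * (coordPerm e)⁻¹ = flipPerm (e k) c := by
  ext x i
  simp only [Equiv.Perm.mul_apply, Equiv.Perm.inv_def, coordPerm_apply, coordPerm_symm_apply,
    flipPerm_apply]
  rcases eq_or_ne i (e k) with rfl | hi
  · simp
  · rw [Function.update_of_ne (by simpa [Equiv.symm_apply_eq] using hi), Function.update_of_ne hi,
      coordPerm_symm_apply, Equiv.apply_symm_apply]

lemma flipPerm_mul_flipPerm_mul_flipPerm (k : Fin n) (a b c : ℂ) :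
    flipPerm k a * flipPerm k b * flipPerm k c = flipPerm k (a - b + c) := by
  ext x i
  rcases eq_or_ne i k with rfl | hi
  · simp only [Equiv.Perm.mul_apply, flipPerm_apply, Function.update_self]
    ring
  · simp only [Equiv.Perm.mul_apply, flipPerm_apply, Function.update_of_ne hi]

lemma flipPerm_mul_self (k : Fin n) (c : ℂ) : flipPerm k c * flipPerm k c = 1 :=
  Equiv.ext (flipPerm k c).left_inv

end

section

variable {n : ℕ} (α : ℂ)

lemma sigC_one (hn : 0 < n) : sigC n α 1 = flipPerm ⟨0, hn⟩ 0 := by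
  rw [sigC, dif_pos ⟨rfl, hn⟩]

lemma sigC_of_two_le_of_le {i : ℕ} (h2 : 2 ≤ i) (hi : i ≤ n) :
    sigC n α i = coordPerm (Equiv.swap ⟨i - 2, by omega⟩ ⟨i - 1, by omega⟩) := by
  rw [sigC, dif_neg (by omega), dif_pos ⟨h2, hi⟩]

lemma sigC_add_one (hn : 0 < n) : sigC n α (n + 1) = flipPerm ⟨n - 1, by omega⟩ 1 := by
  rw [sigC, dif_neg (by omega), dif_neg (by omega), dif_pos ⟨rfl, hn⟩]

lemma sigC_add_two (hn : 0 < n) : sigC n α (n + 2) = flipPerm ⟨n - 1, by omega⟩ α := by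
  rw [sigC, dif_neg (by omega), dif_neg (by omega), dif_neg (by omega), dif_pos ⟨rfl, hn⟩]

lemma sigC_inv (i : ℕ) : (sigC n α i)⁻¹ = sigC n α i := by
  rw [inv_eq_iff_mul_eq_one]
  unfold sigC
  split_ifs
  · exact flipPerm_mul_self _ _
  · rw [← coordPerm_mul, Equiv.swap_mul_self]
    rfl
  · exact flipPerm_mul_self _ _
  · exact flipPerm_mul_self _ _
  · exact one_mul 1

lemma prod_reverse_map_sigC (l : List ℕ) :
    (l.reverse.map (sigC n α)).prod = (l.map (sigC n α)).prod⁻¹ := by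
  rw [List.map_reverse, List.prod_reverse_noncomm, List.map_map]
  simp only [Function.comp_def, sigC_inv]

lemma prod_map_sigC_range'_two {k : ℕ} (hk : k < n) :
    ((List.range' 2 k).map (sigC n α)).prod = coordPerm (Fin.cycleRange ⟨k, hk⟩) := by
  induction k with
  | zero => rw [Fin.cycleRange_mk_zero]; rfl
  | succ k ih =>
    rw [List.range'_concat, List.map_append, List.prod_append, ih (by omega),
      Fin.cycleRange_mk_succ, coordPerm_mul, List.map_singleton, List.prod_singleton,
      sigC_of_two_le_of_le α (by omega) (by omega)]
    congr <;> omega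

end

/-- The element `σ₁σ₂⋯σ_{n+2}σₙσ_{n-1}⋯σ₂` of `[G(2,1,n)]₁^α` (affine maps of `ℂⁿ`,
composed right-to-left) equals the affine reflection `(x₁, …, xₙ) ↦ (-x₁ + (α-1), x₂, …, xₙ)`;
in particular its square is the identity. -/
theorem stmt10 (n : ℕ) (hn : 2 ≤ n) (α : ℂ) :
    ((List.range' 1 (n + 2)).map (sigC n α)).prod *
        ((List.range' 2 (n - 1)).reverse.map (sigC n α)).prod =
      flipPerm ⟨0, by omega⟩ (α - 1) ∧
    (((List.range' 1 (n + 2)).map (sigC n α)).prod *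
        ((List.range' 2 (n - 1)).reverse.map (sigC n α)).prod) ^ 2 = 1 := by
  have hn0 : 0 < n := by omega
  suffices h : ((List.range' 1 (n + 2)).map (sigC n α)).prod *
      ((List.range' 2 (n - 1)).reverse.map (sigC n α)).prod = flipPerm ⟨0, hn0⟩ (α - 1) from
    ⟨h, by rw [h, sq, flipPerm_mul_self]⟩
  set k : Fin n := ⟨n - 1, by omega⟩
  set C := coordPerm (Fin.cycleRange k)
  have hk : Fin.cycleRange k k = ⟨0, hn0⟩ := Fin.ext (by simp [Fin.coe_cycleRange])
  have hC : ((List.range' 2 (n - 1)).map (sigC n α)).prod = C := prod_map_sigC_range'_two α _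
  calc _ = flipPerm ⟨0, hn0⟩ 0 * (C * flipPerm k 1 * C⁻¹) * (C * flipPerm k α * C⁻¹) := by
        simp only [List.range'_one_eq_cons_append hn0, List.map_cons, List.map_append, List.prod_cons, List.prod_append,
          List.map_nil, List.prod_nil, prod_reverse_map_sigC, hC, sigC_one α hn0,
          sigC_add_one α hn0, sigC_add_two α hn0, mul_assoc, inv_mul_cancel_left, one_mul]
        rfl
    _ = flipPerm ⟨0, hn0⟩ (0 - 1 + α) := by
        rw [coordPerm_mul_flipPerm_mul_inv, coordPerm_mul_flipPerm_mul_inv, hk,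
          flipPerm_mul_flipPerm_mul_flipPerm]
    _ = flipPerm ⟨0, hn0⟩ (α - 1) := by rw [zero_sub, neg_add_eq_sub]

end
end

section
/- In the Artin group of [G(2,1,n)]₁^α (generators s₁,...,s_{n+2}, with relations: s₁s₂s₁s₂ = s₂s₁s₂s₁; sᵢs_{i+1}sᵢ = s_{i+1}sᵢs_{i+1} for 2 ≤ i ≤ n-1; s_n s_{n+1} s_n s_{n+1} = s_{n+1} s_n s_{n+1} s_n; s_n s_{n+2} s_n s_{n+2} = s_{n+2} s_n s_{n+2} s_n; all commutations as in the Coxeter-like diagram; and the x-relation s_n s_{n+1} s_n⁻¹ s_{n+2} = s_{n+2} s_n s_{n+1} s_n⁻¹), the assignments u₁ ↦ (s₁⋯s_{n+2}s_n⋯s₂)⁻¹, u₂ ↦ s₁, u₃ ↦ 𝐬 s_{n+1} 𝐬⁻¹, u₄ ↦ 𝐬 s_{n+2} 𝐬⁻¹, tᵢ ↦ s_{i+1} (where 𝐬 = s₂⋯s_n) define an isomorphism from the surface braid group π₁(UC_n(Σ_{0,4})) presented by: u₁u₂u₃u₄t₁⋯t_{n-1}t_{n-1}⋯t₁ = 1;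 tᵢtⱼ = tⱼtᵢ for |i-j| > 1; tᵢt_{i+1}tᵢ = t_{i+1}tᵢt_{i+1}; uᵢtⱼ = tⱼuᵢ for j ≥ 2; uᵢt₁uᵢt₁ = t₁uᵢt₁uᵢ; and uᵢt₁⁻¹uⱼt₁ = t₁⁻¹uⱼt₁uᵢ for i < j. -/
/-- Generator `σ_{i+1}` of the reflection presentation of `[G(2,1,n)]₁^α` (generators are
indexed by `Fin (n+2)`, the generator of index `i` being `σ_{i+1}`). -/
def gC (n : ℕ) (i : Fin (n + 2)) : FreeGroup (Fin (n + 2)) := FreeGroup.of i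

/-- The ascending word `σ_{a+1}σ_{a+2}⋯σ_{b+1}` (in terms of 0-based indices `a ≤ b`). -/
def ascC (n a b : ℕ) : List (FreeGroup (Fin (n + 2))) :=
  ((List.finRange (n + 2)).filter (fun i => decide (a ≤ i.val ∧ i.val ≤ b))).map (gC n)

/-- The word `σ₁σ₂⋯σ_{n+2}σₙσ_{n-1}⋯σ₂`. -/
def extraWordC (n : ℕ) : FreeGroup (Fin (n + 2)) :=
  (ascC n 0 (n + 1)).prod * (ascC n 1 (n - 1)).reverse.prod

/-- The braid-type relations (the relations of the Artin group `Ar([G(2,1,n)]₁^α)`):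
commutations, length-3 braid relations, length-4 braid relations for the double laces, and
the x-relation `σₙσ_{n+1}σₙ⁻¹σ_{n+2} = σ_{n+2}σₙσ_{n+1}σₙ⁻¹`. -/
def artinRelsC (n : ℕ) : Set (FreeGroup (Fin (n + 2))) :=
  -- commutations within the chain σ₁, …, σₙ: σᵢσⱼ = σⱼσᵢ for non-adjacent i, j
  {w | ∃ i j : Fin (n + 2), i.val ≤ n - 1 ∧ j.val ≤ n - 1 ∧
      i.val ≠ j.val + 1 ∧ j.val ≠ i.val + 1 ∧
      w = gC n i * gC n j * (gC n j * gC n i)⁻¹} ∪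
  -- commutations σᵢσⱼ = σⱼσᵢ for i = n+1, n+2 and 1 ≤ j ≤ n-1
  {w | ∃ i j : Fin (n + 2), (i.val = n ∨ i.val = n + 1) ∧ j.val ≤ n - 2 ∧
      w = gC n i * gC n j * (gC n j * gC n i)⁻¹} ∪
  -- braid relations σᵢσⱼσᵢ = σⱼσᵢσⱼ for adjacent 2 ≤ j < i ≤ n
  {w | ∃ i j : Fin (n + 2), 1 ≤ j.val ∧ i.val = j.val + 1 ∧ i.val ≤ n - 1 ∧
      w = gC n i * gC n j * gC n i * (gC n j * gC n i * gC n j)⁻¹} ∪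
  -- length-4 braid relations for the pairs (σ₁,σ₂), (σ_{n+1},σₙ), (σ_{n+2},σₙ)
  {w | ∃ i j : Fin (n + 2),
      ((i.val = 0 ∧ j.val = 1) ∨ (i.val = n ∧ j.val = n - 1) ∨
        (i.val = n + 1 ∧ j.val = n - 1)) ∧
      w = (gC n i * gC n j) ^ 2 * ((gC n j * gC n i) ^ 2)⁻¹} ∪
  -- the x-relation
  {gC n ⟨n - 1, by omega⟩ * gC n ⟨n, by omega⟩ * (gC n ⟨n - 1, by omega⟩)⁻¹ *
      gC n ⟨n + 1, by omega⟩ *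
      (gC n ⟨n + 1, by omega⟩ * gC n ⟨n - 1, by omega⟩ * gC n ⟨n, by omega⟩ *
        (gC n ⟨n - 1, by omega⟩)⁻¹)⁻¹}

/-- The generators of the Artin group `Ar([G(2,1,n)]₁^α)`: `SC n i` is the braid
generator `s_{i+1}`. -/
def SC (n : ℕ) (i : Fin (n + 2)) : PresentedGroup (artinRelsC n) := PresentedGroup.of i

/-- The ascending product `s_{a+1}s_{a+2}⋯s_{b+1}` in the Artin group. -/
def ascSC (n a b : ℕ) : PresentedGroup (artinRelsC n) :=
  (((List.finRange (n + 2)).filter (fun i => decide (a ≤ i.val ∧ i.val ≤ b))).map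
    (SC n)).prod

/-- The descending product `s_{b+1}s_b⋯s_{a+1}` in the Artin group. -/
def descSC (n a b : ℕ) : PresentedGroup (artinRelsC n) :=
  (((List.finRange (n + 2)).filter (fun i => decide (a ≤ i.val ∧ i.val ≤ b))).reverse.map
    (SC n)).prod

/-- Generator `uₖ` (`k = 1, …, 4`) of `π₁(UCₙ(Σ_{0,4}))`. -/
def uF (n : ℕ) (i : Fin 4) : FreeGroup (Fin 4 ⊕ Fin (n - 1)) := FreeGroup.of (Sum.inl i)

/-- Generator `tⱼ` (`j = 1, …, n-1`) of `π₁(UCₙ(Σ_{0,4}))`. -/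
def tF (n : ℕ) (j : Fin (n - 1)) : FreeGroup (Fin 4 ⊕ Fin (n - 1)) :=
  FreeGroup.of (Sum.inr j)

/-- The ascending list `[t₁, …, t_{n-1}]`. -/
def tListF (n : ℕ) : List (FreeGroup (Fin 4 ⊕ Fin (n - 1))) :=
  (List.finRange (n - 1)).map (tF n)

/-- The defining relations of `π₁(UCₙ(Σ_{0,4}))`, the fundamental group of the unordered
configuration space of `n` points on the four-punctured sphere:
`u₁u₂u₃u₄t₁⋯t_{n-1}t_{n-1}⋯t₁ = 1`; `tᵢtⱼ = tⱼtᵢ` for `|i-j| > 1`;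
`tᵢt_{i+1}tᵢ = t_{i+1}tᵢt_{i+1}`; `uᵢtⱼ = tⱼuᵢ` for `j ≥ 2`;
`uᵢt₁uᵢt₁ = t₁uᵢt₁uᵢ`; and `uᵢt₁⁻¹uⱼt₁ = t₁⁻¹uⱼt₁uᵢ` for `i < j`. -/
def surfRels4 (n : ℕ) : Set (FreeGroup (Fin 4 ⊕ Fin (n - 1))) :=
  -- the closedness relation
  {uF n 0 * uF n 1 * uF n 2 * uF n 3 * (tListF n).prod * (tListF n).reverse.prod} ∪
  -- commutations among the tᵢ
  {w | ∃ i j : Fin (n - 1), (i.val + 2 ≤ j.val ∨ j.val + 2 ≤ i.val) ∧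
      w = tF n i * tF n j * (tF n j * tF n i)⁻¹} ∪
  -- braid relations among the tᵢ
  {w | ∃ i j : Fin (n - 1), j.val = i.val + 1 ∧
      w = tF n i * tF n j * tF n i * (tF n j * tF n i * tF n j)⁻¹} ∪
  -- uᵢ commutes with tⱼ for j ≥ 2
  {w | ∃ (i : Fin 4) (j : Fin (n - 1)), 1 ≤ j.val ∧
      w = uF n i * tF n j * (tF n j * uF n i)⁻¹} ∪
  -- uᵢt₁uᵢt₁ = t₁uᵢt₁uᵢ
  {w | ∃ (h : 0 < n - 1) (i : Fin 4),
      w = uF n i * tF n ⟨0, h⟩ * uF n i * tF n ⟨0, h⟩ *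
        (tF n ⟨0, h⟩ * uF n i * tF n ⟨0, h⟩ * uF n i)⁻¹} ∪
  -- uᵢt₁⁻¹uⱼt₁ = t₁⁻¹uⱼt₁uᵢ for i < j
  {w | ∃ (h : 0 < n - 1) (i j : Fin 4), i < j ∧
      w = uF n i * (tF n ⟨0, h⟩)⁻¹ * uF n j * tF n ⟨0, h⟩ *
        ((tF n ⟨0, h⟩)⁻¹ * uF n j * tF n ⟨0, h⟩ * uF n i)⁻¹}

/-!
Both homomorphisms are given on generators, checked on the defining relations, and are mutually
inverse on generators; the substance lies in the relation checks.

Most checks rest on one mechanism: if `s t s = t s t`, conjugation by `s t` sends `s` to `t`, so a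
relation between `s` and an element commuting with `t` becomes a relation with `t`. On the Artin
side this transports the length-4 braid relations of `s_{n+1}`, `s_{n+2}` with `sₙ`, those of
`s_{n+1} s_{n+2}`, and the x-relation down the chain `sₙ, …, s₂`; on the surface side it moves the
relations of `u₃`, `u₄` with `t₁` up to `t_{n-1}` once they are conjugated by `t₁ ⋯ t_{n-1}`.
The relation `u₁u₂u₃u₄t₁⋯t_{n-1}t_{n-1}⋯t₁ = 1` is exactly what makes `u₁` correspond to
`(s₁ ⋯ s_{n+2} sₙ ⋯ s₂)⁻¹`.
-/

namespace G21Braid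

section GroupLemmas

variable {Γ : Type*} [Group Γ]

def Braid4 (x y : Γ) : Prop := x * y * x * y = y * x * y * x

theorem Braid4.symm {x y : Γ} (h : Braid4 x y) : Braid4 y x := Eq.symm h

theorem braid4_iff_sq {x y : Γ} : Braid4 x y ↔ (x * y) ^ 2 = (y * x) ^ 2 := by
  simp only [Braid4, sq, mul_assoc]

theorem braid4_iff_commute {x y : Γ} : Braid4 x y ↔ Commute y (x * y * x) := by
  simp only [Braid4, Commute, SemiconjBy, mul_assoc, eq_comm]

theorem braid4_conj_iff (c : Γ) {x y : Γ} :
    Braid4 (c * x * c⁻¹) (c * y * c⁻¹) ↔ Braid4 x y := by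
  have e : ∀ a b : Γ, c * a * c⁻¹ * (c * b * c⁻¹) = c * (a * b) * c⁻¹ := by intro a b; group
  simp only [Braid4, e, mul_left_inj, mul_right_inj]

theorem Braid4.conj_of_eq {x y x' y' : Γ} (c : Γ) (hx : c * x * c⁻¹ = x') (hy : c * y * c⁻¹ = y')
    (h : Braid4 x y) : Braid4 x' y' :=
  hx ▸ hy ▸ (braid4_conj_iff c).2 h

theorem _root_.Commute.conj_of_eq {x y x' y' : Γ} (c : Γ) (hx : c * x * c⁻¹ = x')
    (hy : c * y * c⁻¹ = y') (h : Commute x y) : Commute x' y' :=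
  hx ▸ hy ▸ h.conj c

section BraidRelation

variable {s t : Γ} (hb : s * t * s = t * s * t)
include hb

theorem mul_conj_eq_of_braid : s * t * s * (s * t)⁻¹ = t := by
  rw [hb]; group

theorem inv_conj_mul_eq_of_braid : (t * s)⁻¹ * s * (t * s) = t :=
  calc (t * s)⁻¹ * s * (t * s) = (t * s)⁻¹ * (s * t * s) := by group
    _ = t := by rw [hb]; group

theorem braid4_conj_step {A : Γ} (hAt : Commute A t) (h : Braid4 A s) :
    Braid4 (s * A * s⁻¹) t := by
  refine h.conj_of_eq (s * t) ?_ (mul_conj_eq_of_braid hb)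
  calc s * t * A * (s * t)⁻¹ = s * (t * A * t⁻¹) * s⁻¹ := by group
    _ = s * A * s⁻¹ := by rw [hAt.symm.mul_inv_cancel]

theorem braid4_conj_inv_step {B : Γ} (hBt : Commute B t) (h : Braid4 B s) :
    Braid4 (s⁻¹ * B * s) t := by
  refine h.conj_of_eq (t * s)⁻¹ ?_ (by rw [inv_inv]; exact inv_conj_mul_eq_of_braid hb)
  calc (t * s)⁻¹ * B * (t * s)⁻¹⁻¹ = s⁻¹ * (t⁻¹ * B * t) * s := by group
    _ = s⁻¹ * B * s := by rw [hBt.symm.inv_mul_cancel]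

theorem braid4_sandwich_step {A : Γ} (hAt : Commute A t) (h : Braid4 A s) :
    Braid4 (s * A * s) t := by
  have hL : s * A * s * t * (s * A * s) * t = (t * s * t) * (A * s * A) * (t * s) := by
    calc s * A * s * t * (s * A * s) * t
        = s * A * (s * t * s) * A * (s * t) := by group
      _ = s * (A * t) * (s * t) * A * (s * t) := by rw [hb]; group
      _ = (s * t) * A * (s * (t * A)) * (s * t) := by rw [hAt.eq]; group
      _ = s * t * (A * s * A) * (t * s * t) := by rw [← hAt.eq]; group
      _ = s * t * (A * s * A * s) * (t * s) := by rw [← hb]; group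
      _ = (s * t * s) * (A * s * A) * (t * s) := by
          rw [show A * s * A * s = s * A * s * A from h]; group
      _ = (t * s * t) * (A * s * A) * (t * s) := by rw [hb]
  have hR : t * (s * A * s) * t * (s * A * s) = (t * s * t) * (A * s * A) * (t * s) := by
    calc t * (s * A * s) * t * (s * A * s)
        = t * s * A * (s * t * s) * A * s := by group
      _ = t * s * (A * t) * (s * (t * A)) * s := by rw [hb]; group
      _ = (t * s * t) * (A * s * (t * A)) * s := by rw [hAt.eq]; group
      _ = (t * s * t) * (A * s * A) * (t * s) := by rw [← hAt.eq]; group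
  exact hL.trans hR.symm

theorem commute_sandwich_step {B C : Γ} (hBs : Commute B s) (hCs : Commute C s)
    (h : Commute (t * C * t) B) : Commute (s * (t * C * t) * s) (t * B * t⁻¹) := by
  refine (h.mul_left (hBs.symm.pow_left 2)).conj_of_eq (t * s) ?_ ?_
  · calc t * s * (t * C * t * s ^ 2) * (t * s)⁻¹ = (t * s * t) * C * (t * s * t⁻¹) := by group
      _ = s * t * (s * C) * (t * s * t⁻¹) := by rw [← hb]; group
      _ = s * t * C * (s * t * s) * t⁻¹ := by rw [← hCs.eq]; group
      _ = s * (t * C * t) * s := by rw [hb]; group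
  · calc t * s * B * (t * s)⁻¹ = t * (s * B * s⁻¹) * t⁻¹ := by group
      _ = t * B * t⁻¹ := by rw [hBs.symm.mul_inv_cancel]

theorem commute_conj_conj_step {B C : Γ} (hBs : Commute B s) (hCs : Commute C s)
    (h : Commute (t * B * t⁻¹) C) : Commute (s * (t * B * t⁻¹) * s⁻¹) (t * C * t⁻¹) := by
  refine h.conj_of_eq (t * s) ?_ ?_
  · calc t * s * (t * B * t⁻¹) * (t * s)⁻¹ = (t * s * t) * B * (t * s * t)⁻¹ := by group
      _ = s * t * (s * B * s⁻¹) * t⁻¹ * s⁻¹ := by rw [← hb]; group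
      _ = s * (t * B * t⁻¹) * s⁻¹ := by rw [hBs.symm.mul_inv_cancel]; group
  · calc t * s * C * (t * s)⁻¹ = t * (s * C * s⁻¹) * t⁻¹ := by group
      _ = t * C * t⁻¹ := by rw [hCs.symm.mul_inv_cancel]

theorem commute_cross_step {B C : Γ} (hBt : Commute B t) (hCt : Commute C t)
    (h : Commute B (s⁻¹ * C * s)) : Commute (s⁻¹ * B * s) (t⁻¹ * (s⁻¹ * C * s) * t) := by
  refine h.conj_of_eq (t * s)⁻¹ ?_ ?_
  · calc (t * s)⁻¹ * B * (t * s)⁻¹⁻¹ = s⁻¹ * (t⁻¹ * B * t) * s := by group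
      _ = s⁻¹ * B * s := by rw [hBt.symm.inv_mul_cancel]
  · calc (t * s)⁻¹ * (s⁻¹ * C * s) * (t * s)⁻¹⁻¹ = (s * t * s)⁻¹ * C * (s * t * s) := by group
      _ = t⁻¹ * s⁻¹ * (t⁻¹ * C * t) * s * t := by rw [hb]; group
      _ = t⁻¹ * (s⁻¹ * C * s) * t := by rw [hCt.symm.inv_mul_cancel]; group

end BraidRelation

section XRelation

variable {p q g : Γ} (hx : Commute q (g * p * g⁻¹))
include hx

theorem Braid4.mul (hp : Braid4 p g) (hq : Braid4 q g) : Braid4 (p * q) g := by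
  have hqgp : q * (g * p) = (g * p * g⁻¹) * (q * g) := by
    calc q * (g * p) = q * (g * p * g⁻¹) * g := by group
      _ = (g * p * g⁻¹) * (q * g) := by rw [hx.eq]; group
  have hL : p * q * g * (p * q) * g = p * g * p * (q * g * q) := by
    calc p * q * g * (p * q) * g = p * (q * (g * p)) * (q * g) := by group
      _ = (p * g * p * g⁻¹) * (q * g * q * g) := by rw [hqgp]; group
      _ = p * g * p * (q * g * q) := by rw [hq]; group
  have hR : g * (p * q) * g * (p * q) = p * g * p * (q * g * q) := by
    calc g * (p * q) * g * (p * q) = g * p * (q * (g * p)) * q := by group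
      _ = (g * p * g * p) * (g⁻¹ * (q * g * q)) := by rw [hqgp]; group
      _ = p * g * p * (q * g * q) := by rw [← hp]; group
  exact hL.trans hR.symm

theorem Braid4.commute_mul_sandwich_left (hp : Braid4 p g) : Commute p (g * (p * q) * g) := by
  have hq : Commute p (g⁻¹ * q * g) := hx.symm.conj_of_eq g⁻¹ (by group) (by group)
  simpa only [show g * p * g * (g⁻¹ * q * g) = g * (p * q) * g by group]
    using (braid4_iff_commute.1 hp.symm).mul_right hq

theorem Braid4.commute_mul_sandwich_right (hq : Braid4 q g) : Commute q (g * (p * q) * g) := by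
  simpa only [show g * p * g⁻¹ * (g * q * g) = g * (p * q) * g by group]
    using hx.mul_right (braid4_iff_commute.1 hq.symm)

end XRelation

end GroupLemmas

section Products

variable {M N : Type*} [Monoid M] [Monoid N]

def ascProd (f : ℕ → M) (a len : ℕ) : M := ((List.range' a len).map f).prod

def descProd (f : ℕ → M) (a len : ℕ) : M := ((List.range' a len).map f).reverse.prod

variable (f : ℕ → M) (a : ℕ)

@[simp] theorem ascProd_zero : ascProd f a 0 = 1 := rfl

@[simp] theorem descProd_zero : descProd f a 0 = 1 := rfl

theorem ascProd_succ (len : ℕ) : ascProd f a (len + 1) = f a * ascProd f (a + 1) len := by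
  simp [ascProd, List.range'_succ]

theorem descProd_succ (len : ℕ) : descProd f a (len + 1) = descProd f (a + 1) len * f a := by
  simp [descProd, List.range'_succ]

theorem ascProd_add (m k : ℕ) : ascProd f a (m + k) = ascProd f a m * ascProd f (a + m) k := by
  simp [ascProd, ← List.range'_append_1]

theorem descProd_add (m k : ℕ) :
    descProd f a (m + k) = descProd f (a + m) k * descProd f a m := by
  simp [descProd, ← List.range'_append_1]

@[simp] theorem ascProd_one : ascProd f a 1 = f a := by simp [ascProd]

theorem ascProd_succ' (len : ℕ) : ascProd f a (len + 1) = ascProd f a len * f (a + len) := by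
  rw [ascProd_add, ascProd_one]

theorem map_ascProd (φ : M →* N) (len : ℕ) : φ (ascProd f a len) = ascProd (φ ∘ f) a len := by
  simp [ascProd, map_list_prod]

theorem map_descProd (φ : M →* N) (len : ℕ) :
    φ (descProd f a len) = descProd (φ ∘ f) a len := by
  simp [descProd, map_list_prod, List.map_reverse]

variable {f a}

theorem ascProd_congr {g : ℕ → M} {len : ℕ} (h : ∀ m, a ≤ m → m < a + len → f m = g m) :
    ascProd f a len = ascProd g a len := by
  unfold ascProd
  congr 1
  exact List.map_congr_left fun m hm => h m (List.mem_range'_1.1 hm).1 (List.mem_range'_1.1 hm).2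

theorem descProd_congr {g : ℕ → M} {len : ℕ} (h : ∀ m, a ≤ m → m < a + len → f m = g m) :
    descProd f a len = descProd g a len := by
  unfold descProd
  congr 2
  exact List.map_congr_left fun m hm => h m (List.mem_range'_1.1 hm).1 (List.mem_range'_1.1 hm).2

theorem commute_ascProd {x : M} {len : ℕ} (h : ∀ m, a ≤ m → m < a + len → Commute x (f m)) :
    Commute x (ascProd f a len) :=
  Commute.list_prod_right _ _ fun _ hy => by
    obtain ⟨m, hm, rfl⟩ := List.mem_map.1 hy
    exact h m (List.mem_range'_1.1 hm).1 (List.mem_range'_1.1 hm).2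

theorem commute_descProd {x : M} {len : ℕ} (h : ∀ m, a ≤ m → m < a + len → Commute x (f m)) :
    Commute x (descProd f a len) :=
  Commute.list_prod_right _ _ fun _ hy => by
    obtain ⟨m, hm, rfl⟩ := List.mem_map.1 (List.mem_reverse.1 hy)
    exact h m (List.mem_range'_1.1 hm).1 (List.mem_range'_1.1 hm).2

end Products

section BraidChain

variable {M : Type*} [Monoid M] {f : ℕ → M} {a len k : ℕ}
variable (hk : a ≤ k) (hkl : k + 2 ≤ a + len)
    (hbr : f k * f (k + 1) * f k = f (k + 1) * f k * f (k + 1))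
    (hhi : ∀ m, k + 2 ≤ m → m < a + len → Commute (f k) (f m))
    (hlo : ∀ m, a ≤ m → m < k → Commute (f (k + 1)) (f m))
include hk hkl hbr hhi hlo

theorem ascProd_mul_of_braid : ascProd f a len * f k = f (k + 1) * ascProd f a len := by
  obtain ⟨lo, rfl⟩ := Nat.exists_eq_add_of_le hk
  obtain ⟨hi, rfl⟩ : ∃ hi, len = lo + 2 + hi := ⟨len - lo - 2, by omega⟩
  have hsplit : ascProd f a (lo + 2 + hi) =
      ascProd f a lo * (f (a + lo) * f (a + lo + 1)) * ascProd f (a + lo + 2) hi := by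
    simp only [ascProd_add, ascProd_succ, ascProd_zero, mul_one, Nat.add_assoc, mul_assoc]
  have hH : Commute (f (a + lo)) (ascProd f (a + lo + 2) hi) :=
    commute_ascProd fun m h1 h2 => hhi m h1 (by omega)
  have hL : Commute (f (a + lo + 1)) (ascProd f a lo) := commute_ascProd hlo
  set x := f (a + lo)
  set y := f (a + lo + 1)
  set L := ascProd f a lo
  set H := ascProd f (a + lo + 2) hi
  calc ascProd f a (lo + 2 + hi) * x
      = L * (x * y) * (H * x) := by rw [hsplit]; simp only [mul_assoc]
    _ = L * (x * y * x) * H := by rw [← hH.eq]; simp only [mul_assoc]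
    _ = (L * y) * (x * y) * H := by rw [hbr]; simp only [mul_assoc]
    _ = y * ascProd f a (lo + 2 + hi) := by rw [← hL.eq, hsplit]; simp only [mul_assoc]

theorem descProd_mul_of_braid : descProd f a len * f (k + 1) = f k * descProd f a len := by
  obtain ⟨lo, rfl⟩ := Nat.exists_eq_add_of_le hk
  obtain ⟨hi, rfl⟩ : ∃ hi, len = lo + 2 + hi := ⟨len - lo - 2, by omega⟩
  have hsplit : descProd f a (lo + 2 + hi) =
      descProd f (a + lo + 2) hi * (f (a + lo + 1) * f (a + lo)) * descProd f a lo := by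
    simp only [descProd_add, descProd_succ, descProd_zero, one_mul, Nat.add_assoc, mul_assoc]
  have hH : Commute (f (a + lo)) (descProd f (a + lo + 2) hi) :=
    commute_descProd fun m h1 h2 => hhi m h1 (by omega)
  have hL : Commute (f (a + lo + 1)) (descProd f a lo) := commute_descProd hlo
  set x := f (a + lo)
  set y := f (a + lo + 1)
  set L := descProd f a lo
  set H := descProd f (a + lo + 2) hi
  calc descProd f a (lo + 2 + hi) * y
      = H * (y * x) * (L * y) := by rw [hsplit]; simp only [mul_assoc]
    _ = H * (y * x * y) * L := by rw [← hL.eq]; simp only [mul_assoc]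
    _ = (H * x) * (y * x) * L := by rw [← hbr]; simp only [mul_assoc]
    _ = x * descProd f a (lo + 2 + hi) := by rw [← hH.eq, hsplit]; simp only [mul_assoc]

end BraidChain

theorem map_val_filter_finRange {N a b : ℕ} (hb : b < N) :
    ((List.finRange N).filter (fun i => decide (a ≤ i.val ∧ i.val ≤ b))).map Fin.val =
      List.range' a (b + 1 - a) := by
  refine List.Pairwise.eq_of_mem_iff (r := (· < ·))
    (List.pairwise_map.2 ((List.pairwise_lt_finRange N).filter _)) List.pairwise_lt_range' ?_
  intro v
  simp only [List.mem_map, List.mem_filter, List.mem_finRange, true_and, decide_eq_true_eq,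
    List.mem_range'_1]
  exact ⟨fun ⟨i, hi, hv⟩ => by omega, fun hv => ⟨⟨v, by omega⟩, by simp; omega, rfl⟩⟩

section ArtinGroup

variable {n : ℕ}

/-- `gen n k` is the generator `s_{k+1}` of `Ar([G(2,1,n)]₁^α)`, and `1` for `k ≥ n + 2`. -/
noncomputable def gen (n k : ℕ) : PresentedGroup (artinRelsC n) :=
  if h : k < n + 2 then SC n ⟨k, h⟩ else 1

theorem SC_eq_gen (i : Fin (n + 2)) : SC n i = gen n i := by simp [gen]

theorem mk_gC (i : Fin (n + 2)) : PresentedGroup.mk (artinRelsC n) (gC n i) = gen n i :=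
  SC_eq_gen i

theorem ascSC_eq {a b : ℕ} (hb : b < n + 2) : ascSC n a b = ascProd (gen n) a (b + 1 - a) := by
  rw [ascSC, ascProd, ← map_val_filter_finRange hb, List.map_map]
  exact congrArg List.prod (List.map_congr_left fun i _ => SC_eq_gen i)

theorem descSC_eq {a b : ℕ} (hb : b < n + 2) :
    descSC n a b = descProd (gen n) a (b + 1 - a) := by
  rw [descSC, descProd, ← map_val_filter_finRange hb, List.map_map, ← List.map_reverse]
  exact congrArg List.prod (List.map_congr_left fun i _ => SC_eq_gen i)

theorem gen_commute_of_chain {i j : ℕ} (hi : i ≤ n - 1) (hj : j ≤ n - 1) (hij : i ≠ j + 1)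
    (hji : j ≠ i + 1) : Commute (gen n i) (gen n j) := by
  have := PresentedGroup.mk_eq_mk_of_mul_inv_mem (rels := artinRelsC n)
    (Or.inl (Or.inl (Or.inl (Or.inl ⟨⟨i, by omega⟩, ⟨j, by omega⟩, hi, hj, hij, hji, rfl⟩))))
  simp only [map_mul, mk_gC] at this
  exact this

theorem gen_commute_of_puncture {i j : ℕ} (hi : i = n ∨ i = n + 1) (hj : j ≤ n - 2) :
    Commute (gen n i) (gen n j) := by
  have := PresentedGroup.mk_eq_mk_of_mul_inv_mem (rels := artinRelsC n)
    (Or.inl (Or.inl (Or.inl (Or.inr ⟨⟨i, by omega⟩, ⟨j, by omega⟩, hi, hj, rfl⟩))))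
  simp only [map_mul, mk_gC] at this
  exact this

theorem gen_braid {j : ℕ} (hj : 1 ≤ j) (hjn : j + 1 ≤ n - 1) :
    gen n j * gen n (j + 1) * gen n j = gen n (j + 1) * gen n j * gen n (j + 1) := by
  have := PresentedGroup.mk_eq_mk_of_mul_inv_mem (rels := artinRelsC n)
    (Or.inl (Or.inl (Or.inr ⟨⟨j + 1, by omega⟩, ⟨j, by omega⟩, hj, rfl, hjn, rfl⟩)))
  simpa only [map_mul, mk_gC] using this.symm

theorem braid4_gen {i j : ℕ}
    (h : (i = 0 ∧ j = 1) ∨ (i = n ∧ j = n - 1) ∨ (i = n + 1 ∧ j = n - 1)) :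
    Braid4 (gen n i) (gen n j) := by
  have := PresentedGroup.mk_eq_mk_of_mul_inv_mem (rels := artinRelsC n)
    (Or.inl (Or.inr ⟨⟨i, by omega⟩, ⟨j, by omega⟩, h, rfl⟩))
  simpa only [map_mul, map_pow, mk_gC, braid4_iff_sq] using this

theorem gen_x_relation :
    Commute (gen n (n + 1)) (gen n (n - 1) * gen n n * (gen n (n - 1))⁻¹) := by
  have := PresentedGroup.mk_eq_mk_of_mul_inv_mem (rels := artinRelsC n) (Or.inr rfl)
  simp only [map_mul, map_inv, mk_gC] at this
  rw [commute_iff_eq]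
  simpa only [mul_assoc] using this.symm

theorem gen_commute_of_far {i j : ℕ} (hi : i ≤ n - 1) (hj : j ≤ n - 1) (h : i + 2 ≤ j) :
    Commute (gen n i) (gen n j) :=
  gen_commute_of_chain hi hj (by omega) (by omega)

end ArtinGroup

section Towers

variable {n : ℕ}

/-- `conjGen n k m = (s_{k+1} ⋯ s_n) s_{m+1} (s_{k+1} ⋯ s_n)⁻¹`. -/
noncomputable def conjGen (n k m : ℕ) : PresentedGroup (artinRelsC n) :=
  ascProd (gen n) k (n - k) * gen n m * (ascProd (gen n) k (n - k))⁻¹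

/-- `sandwichGen n k = (s_{k+1} ⋯ s_n) s_{n+1} s_{n+2} (s_n ⋯ s_{k+1})`. -/
noncomputable def sandwichGen (n k : ℕ) : PresentedGroup (artinRelsC n) :=
  ascProd (gen n) k (n - k) * (gen n n * gen n (n + 1)) * descProd (gen n) k (n - k)

@[simp] theorem conjGen_self (m : ℕ) : conjGen n n m = gen n m := by simp [conjGen]

@[simp] theorem sandwichGen_self : sandwichGen n n = gen n n * gen n (n + 1) := by
  simp [sandwichGen]

theorem conjGen_of_lt {k : ℕ} (m : ℕ) (hk : k < n) :
    conjGen n k m = gen n k * conjGen n (k + 1) m * (gen n k)⁻¹ := by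
  rw [conjGen, conjGen, show n - k = n - (k + 1) + 1 by omega, ascProd_succ]
  group

theorem sandwichGen_of_lt {k : ℕ} (hk : k < n) :
    sandwichGen n k = gen n k * sandwichGen n (k + 1) * gen n k := by
  rw [sandwichGen, sandwichGen, show n - k = n - (k + 1) + 1 by omega, ascProd_succ,
    descProd_succ]
  group

theorem conjGen_commute {k j m : ℕ} (hm : m = n ∨ m = n + 1) (hj : j + 2 ≤ k) (hk : k ≤ n) :
    Commute (conjGen n k m) (gen n j) := by
  have hs : Commute (gen n j) (ascProd (gen n) k (n - k)) :=
    commute_ascProd fun i h1 h2 => gen_commute_of_far (by omega) (by omega) (by omega)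
  exact ((hs.mul_right (gen_commute_of_puncture hm (by omega)).symm).mul_right hs.inv_right).symm

theorem sandwichGen_commute {k j : ℕ} (hj : j + 2 ≤ k) (hk : k ≤ n) :
    Commute (sandwichGen n k) (gen n j) := by
  have hs : Commute (gen n j) (ascProd (gen n) k (n - k)) :=
    commute_ascProd fun i h1 h2 => gen_commute_of_far (by omega) (by omega) (by omega)
  have hs' : Commute (gen n j) (descProd (gen n) k (n - k)) :=
    commute_descProd fun i h1 h2 => gen_commute_of_far (by omega) (by omega) (by omega)
  have hpq : Commute (gen n j) (gen n n * gen n (n + 1)) :=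
    ((gen_commute_of_puncture (.inl rfl) (by omega)).mul_left
      (gen_commute_of_puncture (.inr rfl) (by omega))).symm
  exact ((hs.mul_right hpq).mul_right hs').symm

theorem braid4_conjGen {m k : ℕ} (hm : m = n ∨ m = n + 1) (hk1 : 1 ≤ k) (hk : k ≤ n - 1) :
    Braid4 (conjGen n (k + 1) m) (gen n k) := by
  induction hk using Nat.decreasingInduction with
  | self =>
    rw [Nat.sub_add_cancel (by omega), conjGen_self]
    exact braid4_gen (by omega)
  | of_succ k hk ih =>
    rw [conjGen_of_lt m (by omega)]
    exact braid4_conj_step (gen_braid hk1 (by omega)).symm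
      (conjGen_commute hm (by omega) (by omega)) (ih (by omega))

theorem braid4_sandwichGen {k : ℕ} (hk1 : 1 ≤ k) (hk : k ≤ n - 1) :
    Braid4 (sandwichGen n (k + 1)) (gen n k) := by
  induction hk using Nat.decreasingInduction with
  | self =>
    rw [Nat.sub_add_cancel (by omega), sandwichGen_self]
    exact Braid4.mul gen_x_relation (braid4_gen (by omega)) (braid4_gen (by omega))
  | of_succ k hk ih =>
    rw [sandwichGen_of_lt (by omega)]
    exact braid4_sandwich_step (gen_braid hk1 (by omega)).symm
      (sandwichGen_commute (by omega) (by omega)) (ih (by omega))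

theorem sandwichGen_commute_conjGen {m k : ℕ} (hm : m = n ∨ m = n + 1) (hk1 : 1 ≤ k)
    (hk : k ≤ n - 1) : Commute (sandwichGen n k) (conjGen n (k + 1) m) := by
  induction hk using Nat.decreasingInduction with
  | self =>
    rw [sandwichGen_of_lt (by omega), Nat.sub_add_cancel (by omega), sandwichGen_self,
      conjGen_self]
    rcases hm with rfl | rfl
    · exact (Braid4.commute_mul_sandwich_left gen_x_relation (braid4_gen (by omega))).symm
    · exact (Braid4.commute_mul_sandwich_right gen_x_relation (braid4_gen (by omega))).symm
  | of_succ k hk ih =>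
    rw [sandwichGen_of_lt (by omega), conjGen_of_lt m (by omega), sandwichGen_of_lt (by omega)]
    exact commute_sandwich_step (gen_braid hk1 (by omega))
      (conjGen_commute hm (by omega) (by omega)) (sandwichGen_commute (by omega) (by omega))
      (by rw [← sandwichGen_of_lt (by omega)]; exact ih (by omega))

theorem conjGen_commute_conjGen {k : ℕ} (hk1 : 1 ≤ k) (hk : k ≤ n - 1) :
    Commute (conjGen n k n) (conjGen n (k + 1) (n + 1)) := by
  induction hk using Nat.decreasingInduction with
  | self =>
    rw [conjGen_of_lt n (by omega), Nat.sub_add_cancel (by omega), conjGen_self, conjGen_self]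
    exact gen_x_relation.symm
  | of_succ k hk ih =>
    rw [conjGen_of_lt n (by omega), conjGen_of_lt n (by omega),
      conjGen_of_lt (n + 1) (by omega)]
    exact commute_conj_conj_step (gen_braid hk1 (by omega))
      (conjGen_commute (.inl rfl) (by omega) (by omega))
      (conjGen_commute (.inr rfl) (by omega) (by omega))
      (by rw [← conjGen_of_lt n (by omega)]; exact ih (by omega))

theorem ascProd_mul_gen {k : ℕ} (hk1 : 1 ≤ k) (hk : k ≤ n - 2) :
    ascProd (gen n) 1 (n - 1) * gen n k = gen n (k + 1) * ascProd (gen n) 1 (n - 1) :=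
  ascProd_mul_of_braid hk1 (by omega) (gen_braid hk1 (by omega))
    (fun _ h1 h2 => gen_commute_of_far (by omega) (by omega) h1)
    (fun _ _ h2 => (gen_commute_of_far (by omega) (by omega) (by omega)).symm)

theorem descProd_mul_gen {k : ℕ} (hk1 : 1 ≤ k) (hk : k ≤ n - 2) :
    descProd (gen n) 1 (n - 1) * gen n (k + 1) = gen n k * descProd (gen n) 1 (n - 1) :=
  descProd_mul_of_braid hk1 (by omega) (gen_braid hk1 (by omega))
    (fun _ h1 h2 => gen_commute_of_far (by omega) (by omega) h1)
    (fun _ _ h2 => (gen_commute_of_far (by omega) (by omega) (by omega)).symm)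

theorem conjGen_one_commute_gen {m k : ℕ} (hm : m = n ∨ m = n + 1) (hk1 : 1 ≤ k)
    (hk : k ≤ n - 2) : Commute (conjGen n 1 m) (gen n (k + 1)) :=
  (gen_commute_of_puncture hm (by omega)).conj_of_eq (ascProd (gen n) 1 (n - 1)) rfl
    (by rw [ascProd_mul_gen hk1 hk]; group)

theorem inv_gen_mul_conjGen_one {m : ℕ} (hn : 2 ≤ n) :
    (gen n 1)⁻¹ * conjGen n 1 m * gen n 1 = conjGen n 2 m := by
  rw [conjGen_of_lt m (by omega)]
  group

theorem braid4_conjGen_one {m : ℕ} (hm : m = n ∨ m = n + 1) (hn : 2 ≤ n) :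
    Braid4 (conjGen n 1 m) (gen n 1) :=
  (braid4_conjGen hm le_rfl (by omega)).conj_of_eq (gen n 1)
    (conjGen_of_lt m (by omega)).symm (by group)

theorem conjGen_one_eq {n m : ℕ} (hn : 1 ≤ n) (hm : m < n + 2) :
    conjGen n 1 m = ascSC n 1 (n - 1) * SC n ⟨m, hm⟩ * (ascSC n 1 (n - 1))⁻¹ := by
  rw [ascSC_eq (by omega), SC_eq_gen, conjGen, Nat.sub_add_cancel hn]

end Towers

section Delta

variable {n : ℕ}

/-- `delta n = s₁ ⋯ s_{n+2} s_n ⋯ s₂`, the inverse of the image of `u₁`. -/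
noncomputable def delta (n : ℕ) : PresentedGroup (artinRelsC n) := gen n 0 * sandwichGen n 1

theorem delta_eq : delta n = gen n 0 * ascProd (gen n) 1 (n - 1) * (gen n n * gen n (n + 1)) *
    descProd (gen n) 1 (n - 1) := by
  simp only [delta, sandwichGen, mul_assoc]

theorem delta_commute_gen {k : ℕ} (hk1 : 1 ≤ k) (hk : k ≤ n - 2) :
    Commute (delta n) (gen n (k + 1)) := by
  have hpq : Commute (gen n n * gen n (n + 1)) (gen n k) :=
    (gen_commute_of_puncture (.inl rfl) (by omega)).mul_left
      (gen_commute_of_puncture (.inr rfl) (by omega))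
  have h0 : Commute (gen n 0) (gen n (k + 1)) := gen_commute_of_far (by omega) (by omega) (by omega)
  calc delta n * gen n (k + 1)
      = gen n 0 * ascProd (gen n) 1 (n - 1) * ((gen n n * gen n (n + 1)) * gen n k) *
          descProd (gen n) 1 (n - 1) := by
        rw [delta_eq, mul_assoc _ (descProd _ _ _), descProd_mul_gen hk1 hk]; group
    _ = (gen n 0 * gen n (k + 1)) * ascProd (gen n) 1 (n - 1) * (gen n n * gen n (n + 1)) *
          descProd (gen n) 1 (n - 1) := by
        rw [hpq.eq, mul_assoc (gen n 0), ← mul_assoc _ (gen n k), ascProd_mul_gen hk1 hk]; group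
    _ = gen n (k + 1) * delta n := by rw [h0.eq, delta_eq]; group

theorem delta_eq_sandwich (hn : 2 ≤ n) :
    delta n = gen n 0 * (gen n 1 * sandwichGen n 2 * gen n 1) := by
  rw [delta, sandwichGen_of_lt (by omega)]

theorem braid4_inv_delta (hn : 2 ≤ n) : Braid4 (delta n)⁻¹ (gen n 1) := by
  have h0R : Commute (gen n 0) (sandwichGen n 2) :=
    (sandwichGen_commute (by omega) (by omega)).symm
  have h : delta n * (gen n 1)⁻¹ * delta n =
      (gen n 0 * gen n 1 * gen n 0) * (sandwichGen n 2 * gen n 1 * sandwichGen n 2) * gen n 1 := by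
    rw [delta_eq_sandwich hn]
    calc gen n 0 * (gen n 1 * sandwichGen n 2 * gen n 1) * (gen n 1)⁻¹ *
          (gen n 0 * (gen n 1 * sandwichGen n 2 * gen n 1))
        = gen n 0 * gen n 1 * (sandwichGen n 2 * gen n 0) * gen n 1 * sandwichGen n 2 *
            gen n 1 := by group
      _ = _ := by rw [← h0R.eq]; group
  have hc : Commute (gen n 1) (delta n * (gen n 1)⁻¹ * delta n) := by
    rw [h]
    exact ((braid4_iff_commute.1 (braid4_gen (.inl ⟨rfl, rfl⟩))).mul_right
      (braid4_iff_commute.1 (braid4_sandwichGen le_rfl (by omega)))).mul_right (.refl _)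
  rw [braid4_iff_commute]
  simpa only [mul_inv_rev, inv_inv, mul_assoc] using hc.inv_right

theorem delta_commute_conj_gen_zero (hn : 2 ≤ n) :
    Commute (delta n) ((gen n 1)⁻¹ * gen n 0 * gen n 1) := by
  have h0R : Commute (gen n 0) (sandwichGen n 2) :=
    (sandwichGen_commute (by omega) (by omega)).symm
  refine ((braid4_iff_commute.1 (braid4_gen (.inl ⟨rfl, rfl⟩)).symm).symm.mul_left
    h0R.symm).conj_of_eq (gen n 1)⁻¹ ?_ (by group)
  rw [delta_eq_sandwich hn]; group

theorem delta_commute_conjGen {m : ℕ} (hm : m = n ∨ m = n + 1) (hn : 2 ≤ n) :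
    Commute (delta n) (conjGen n 2 m) :=
  (conjGen_commute hm le_rfl hn).symm.mul_left
    (sandwichGen_commute_conjGen hm le_rfl (by omega))

theorem ascSC_mul_descSC {n : ℕ} (hn : 1 ≤ n) :
    ascSC n 0 (n + 1) * descSC n 1 (n - 1) = delta n := by
  rw [ascSC_eq (by omega), descSC_eq (by omega), delta_eq, Nat.sub_add_cancel hn,
    show n + 1 + 1 - 0 = 1 + (n - 1) + 2 by omega, ascProd_add, ascProd_add, ascProd_one,
    ascProd_succ, ascProd_one, Nat.add_sub_cancel' hn]
  simp only [Nat.zero_add, mul_assoc]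

end Delta

section SurfaceGroup

variable {n : ℕ}

theorem map_finRange_eq_map_range' {β : Type*} {N : ℕ} {F : Fin N → β} {g : ℕ → β}
    (h : ∀ j, F j = g (j.val + 1)) : (List.finRange N).map F = (List.range' 1 N).map g := by
  rw [List.range'_succ_left, List.map_map, ← List.range_eq_range']
  exact List.ext_getElem (by simp) fun i _ _ => by simp [h]

theorem map_tListF_prod {Γ : Type*} [Monoid Γ] (f : FreeGroup (Fin 4 ⊕ Fin (n - 1)) →* Γ)
    {g : ℕ → Γ} (h : ∀ j, f (tF n j) = g (j.val + 1)) :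
    f (tListF n).prod = ascProd g 1 (n - 1) := by
  rw [tListF, map_list_prod, List.map_map, map_finRange_eq_map_range' (F := f ∘ tF n) h, ascProd]

theorem map_tListF_reverse_prod {Γ : Type*} [Monoid Γ]
    (f : FreeGroup (Fin 4 ⊕ Fin (n - 1)) →* Γ) {g : ℕ → Γ} (h : ∀ j, f (tF n j) = g (j.val + 1)) :
    f (tListF n).reverse.prod = descProd g 1 (n - 1) := by
  rw [tListF, map_list_prod, List.map_reverse, List.map_map,
    map_finRange_eq_map_range' (F := f ∘ tF n) h, descProd]

noncomputable def uGen (n : ℕ) (i : Fin 4) : PresentedGroup (surfRels4 n) :=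
  PresentedGroup.of (Sum.inl i)

/-- `tGen n k` is the generator `t_k` for `1 ≤ k ≤ n - 1`, and `1` otherwise. -/
noncomputable def tGen (n k : ℕ) : PresentedGroup (surfRels4 n) :=
  if h : 1 ≤ k ∧ k - 1 < n - 1 then PresentedGroup.of (Sum.inr ⟨k - 1, h.2⟩) else 1

theorem mk_uF (i : Fin 4) : PresentedGroup.mk (surfRels4 n) (uF n i) = uGen n i := rfl

theorem mk_tF (j : Fin (n - 1)) : PresentedGroup.mk (surfRels4 n) (tF n j) = tGen n (j + 1) := by
  rw [tGen, dif_pos ⟨by omega, by simp⟩]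
  rfl

theorem uGen_mul_tGen_prod_eq_one :
    uGen n 0 * uGen n 1 * uGen n 2 * uGen n 3 * ascProd (tGen n) 1 (n - 1) *
      descProd (tGen n) 1 (n - 1) = 1 := by
  have := PresentedGroup.one_of_mem (rels := surfRels4 n)
    (Or.inl (Or.inl (Or.inl (Or.inl (Or.inl rfl)))))
  rwa [map_mul, map_mul, map_mul, map_mul, map_mul, map_tListF_prod _ mk_tF,
    map_tListF_reverse_prod _ mk_tF] at this

theorem tGen_commute {i j : ℕ} (hi1 : 1 ≤ i) (hi : i ≤ n - 1) (hj1 : 1 ≤ j) (hj : j ≤ n - 1)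
    (hij : i + 2 ≤ j ∨ j + 2 ≤ i) : Commute (tGen n i) (tGen n j) := by
  have := PresentedGroup.mk_eq_mk_of_mul_inv_mem (rels := surfRels4 n)
    (Or.inl (Or.inl (Or.inl (Or.inl (Or.inr
      ⟨⟨i - 1, by omega⟩, ⟨j - 1, by omega⟩, by simp only; omega, rfl⟩)))))
  simp only [map_mul, mk_tF, Nat.sub_add_cancel hi1, Nat.sub_add_cancel hj1] at this
  exact this

theorem tGen_braid {i : ℕ} (hi1 : 1 ≤ i) (hi : i + 1 ≤ n - 1) :
    tGen n i * tGen n (i + 1) * tGen n i = tGen n (i + 1) * tGen n i * tGen n (i + 1) := by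
  have := PresentedGroup.mk_eq_mk_of_mul_inv_mem (rels := surfRels4 n)
    (Or.inl (Or.inl (Or.inl (Or.inr ⟨⟨i - 1, by omega⟩, ⟨i, by omega⟩, by simp only; omega, rfl⟩))))
  simpa only [map_mul, mk_tF, Nat.sub_add_cancel hi1] using this

theorem uGen_commute_tGen (i : Fin 4) {j : ℕ} (hj2 : 2 ≤ j) (hj : j ≤ n - 1) :
    Commute (uGen n i) (tGen n j) := by
  have := PresentedGroup.mk_eq_mk_of_mul_inv_mem (rels := surfRels4 n)
    (Or.inl (Or.inl (Or.inr ⟨i, ⟨j - 1, by omega⟩, by simp only; omega, rfl⟩)))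
  simp only [map_mul, mk_uF, mk_tF, Nat.sub_add_cancel (show 1 ≤ j by omega)] at this
  exact this

theorem braid4_uGen_tGen_one (hn : 2 ≤ n) (i : Fin 4) : Braid4 (uGen n i) (tGen n 1) := by
  have := PresentedGroup.mk_eq_mk_of_mul_inv_mem (rels := surfRels4 n)
    (Or.inl (Or.inr ⟨by omega, i, rfl⟩))
  simp only [map_mul, mk_uF, mk_tF] at this
  exact this

theorem uGen_commute_conj_uGen (hn : 2 ≤ n) {i j : Fin 4} (hij : i < j) :
    Commute (uGen n i) ((tGen n 1)⁻¹ * uGen n j * tGen n 1) := by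
  have := PresentedGroup.mk_eq_mk_of_mul_inv_mem (rels := surfRels4 n)
    (Or.inr ⟨by omega, i, j, hij, rfl⟩)
  simp only [map_mul, map_inv, mk_uF, mk_tF] at this
  rw [commute_iff_eq]
  simpa only [mul_assoc] using this

end SurfaceGroup

section ConjT

variable {n : ℕ}

noncomputable def conjT (n : ℕ) (x : PresentedGroup (surfRels4 n)) (k : ℕ) :
    PresentedGroup (surfRels4 n) :=
  (ascProd (tGen n) 1 k)⁻¹ * x * ascProd (tGen n) 1 k

theorem conjT_zero (x : PresentedGroup (surfRels4 n)) : conjT n x 0 = x := by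
  simp [conjT]

theorem conjT_succ (x : PresentedGroup (surfRels4 n)) (k : ℕ) :
    conjT n x (k + 1) = (tGen n (k + 1))⁻¹ * conjT n x k * tGen n (k + 1) := by
  rw [conjT, conjT, ascProd_succ', Nat.add_comm 1 k]
  group

theorem ascProd_tGen_mul_tGen {j k : ℕ} (hj1 : 1 ≤ j) (hjk : j + 1 ≤ k) (hk : k ≤ n - 1) :
    ascProd (tGen n) 1 k * tGen n j = tGen n (j + 1) * ascProd (tGen n) 1 k :=
  ascProd_mul_of_braid hj1 (by omega) (tGen_braid hj1 (by omega))
    (fun m h1 h2 => tGen_commute (i := j) (j := m) hj1 (by omega) (by omega) (by omega) (.inl h1))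
    (fun m h1 h2 => tGen_commute (i := j + 1) (j := m) (by omega) (by omega) h1 (by omega)
      (.inr (by omega)))

theorem conjT_uGen_commute_tGen_of_lt (i : Fin 4) {j k : ℕ} (hj1 : 1 ≤ j) (hjk : j + 1 ≤ k)
    (hk : k ≤ n - 1) : Commute (conjT n (uGen n i) k) (tGen n j) :=
  (uGen_commute_tGen i (j := j + 1) (by omega) (by omega)).conj_of_eq (ascProd (tGen n) 1 k)⁻¹
    (by rw [inv_inv, conjT])
    (by rw [inv_inv, mul_assoc, ← ascProd_tGen_mul_tGen hj1 hjk hk]; group)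

theorem conjT_uGen_commute_tGen_of_gt (i : Fin 4) {j k : ℕ} (hkj : k + 2 ≤ j)
    (hj : j ≤ n - 1) : Commute (conjT n (uGen n i) k) (tGen n j) := by
  have hP : Commute (ascProd (tGen n) 1 k) (tGen n j) :=
    (commute_ascProd (f := tGen n) fun m h1 h2 =>
      tGen_commute (i := j) (j := m) (by omega) hj (by omega) (by omega) (.inr (by omega))).symm
  exact (hP.inv_left.mul_left (uGen_commute_tGen i (by omega) hj)).mul_left hP

theorem conjT_uGen_commute_uGen_one (hn : 2 ≤ n) {i : Fin 4} (hi : 1 < i) {k : ℕ}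
    (hk1 : 1 ≤ k) (hk : k ≤ n - 1) : Commute (conjT n (uGen n i) k) (uGen n 1) := by
  obtain ⟨k, rfl⟩ := Nat.exists_eq_add_of_le' hk1
  have hP : Commute (ascProd (tGen n) 2 k) (uGen n 1) :=
    (commute_ascProd fun _ h1 h2 => uGen_commute_tGen 1 h1 (by omega)).symm
  have h : conjT n (uGen n i) (k + 1) =
      (ascProd (tGen n) 2 k)⁻¹ * ((tGen n 1)⁻¹ * uGen n i * tGen n 1) * ascProd (tGen n) 2 k := by
    rw [conjT, ascProd_succ]; group
  rw [h]
  exact (hP.inv_left.mul_left (uGen_commute_conj_uGen hn hi).symm).mul_left hP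

theorem braid4_conjT_uGen_succ (hn : 2 ≤ n) (i : Fin 4) {k : ℕ} (hk : k + 2 ≤ n) :
    Braid4 (conjT n (uGen n i) k) (tGen n (k + 1)) := by
  induction k with
  | zero => exact braid4_uGen_tGen_one hn i
  | succ k ih =>
    rw [conjT_succ]
    exact braid4_conj_inv_step (tGen_braid (by omega) (by omega))
      (conjT_uGen_commute_tGen_of_gt i (by omega) (by omega)) (ih (by omega))

theorem braid4_conjT_uGen (hn : 2 ≤ n) (i : Fin 4) :
    Braid4 (conjT n (uGen n i) (n - 1)) (tGen n (n - 1)) := by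
  have h := braid4_conjT_uGen_succ hn i (k := n - 2) (by omega)
  have e := conjT_succ (uGen n i) (n - 2)
  rw [show n - 2 + 1 = n - 1 by omega] at h e
  exact h.conj_of_eq (tGen n (n - 1))⁻¹ (by rw [e, inv_inv]) (by group)

theorem conjT_uGen_commute_conjT_uGen (hn : 2 ≤ n) {i j : Fin 4} (hij : i < j) {k : ℕ}
    (hk : k ≤ n - 2) : Commute (conjT n (uGen n i) k) (conjT n (uGen n j) (k + 1)) := by
  induction k with
  | zero =>
    rw [conjT_succ, conjT_zero, conjT_zero]
    exact uGen_commute_conj_uGen hn hij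
  | succ k ih =>
    rw [conjT_succ _ (k + 1), conjT_succ _ k, conjT_succ _ k]
    refine commute_cross_step (tGen_braid (by omega) (by omega))
      (conjT_uGen_commute_tGen_of_gt i (by omega) (by omega))
      (conjT_uGen_commute_tGen_of_gt j (by omega) (by omega)) ?_
    rw [← conjT_succ]
    exact ih (by omega)

end ConjT

section Phi

variable {n : ℕ}

noncomputable def phiGen (n : ℕ) : Fin 4 ⊕ Fin (n - 1) → PresentedGroup (artinRelsC n)
  | .inl i => ![(delta n)⁻¹, gen n 0, conjGen n 1 n, conjGen n 1 (n + 1)] i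
  | .inr j => gen n (j + 1)

theorem lift_phiGen_uF (i : Fin 4) :
    FreeGroup.lift (phiGen n) (uF n i) = phiGen n (.inl i) := FreeGroup.lift_apply_of

theorem lift_phiGen_tF (j : Fin (n - 1)) :
    FreeGroup.lift (phiGen n) (tF n j) = gen n (j + 1) := FreeGroup.lift_apply_of

theorem phiGen_commute_gen (i : Fin 4) {k : ℕ} (hk1 : 1 ≤ k) (hk : k ≤ n - 2) :
    Commute (phiGen n (.inl i)) (gen n (k + 1)) := by
  fin_cases i
  · exact (delta_commute_gen hk1 hk).inv_left
  · exact gen_commute_of_far (i := 0) (j := k + 1) (by omega) (by omega) (by omega)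
  · exact conjGen_one_commute_gen (.inl rfl) hk1 hk
  · exact conjGen_one_commute_gen (.inr rfl) hk1 hk

theorem braid4_phiGen (hn : 2 ≤ n) (i : Fin 4) : Braid4 (phiGen n (.inl i)) (gen n 1) := by
  fin_cases i
  · exact braid4_inv_delta hn
  · exact braid4_gen (.inl ⟨rfl, rfl⟩)
  · exact braid4_conjGen_one (.inl rfl) hn
  · exact braid4_conjGen_one (.inr rfl) hn

theorem phiGen_commute_conj (hn : 2 ≤ n) {i j : Fin 4} (hij : i < j) :
    Commute (phiGen n (.inl i)) ((gen n 1)⁻¹ * phiGen n (.inl j) * gen n 1) := by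
  fin_cases i <;> fin_cases j <;> simp only [Fin.lt_def] at hij <;> try omega
  all_goals dsimp only [phiGen, Fin.reduceFinMk, Matrix.cons_val]
  all_goals try rw [inv_gen_mul_conjGen_one hn]
  · exact (delta_commute_conj_gen_zero hn).inv_left
  · exact (delta_commute_conjGen (.inl rfl) hn).inv_left
  · exact (delta_commute_conjGen (.inr rfl) hn).inv_left
  · exact (conjGen_commute (k := 2) (.inl rfl) le_rfl hn).symm
  · exact (conjGen_commute (k := 2) (.inr rfl) le_rfl hn).symm
  · exact conjGen_commute_conjGen (k := 1) le_rfl (by omega)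

theorem phiGen_rels (hn : 2 ≤ n) : ∀ r ∈ surfRels4 n, FreeGroup.lift (phiGen n) r = 1 := by
  rintro r (((((rfl | ⟨i, j, hij, rfl⟩) | ⟨i, j, hij, rfl⟩) | ⟨i, j, hj, rfl⟩) | ⟨-, i, rfl⟩) |
    ⟨-, i, j, hij, rfl⟩)
  · rw [map_mul, map_mul, map_mul, map_mul, map_mul, map_tListF_prod _ lift_phiGen_tF,
      map_tListF_reverse_prod _ lift_phiGen_tF]
    simp only [lift_phiGen_uF, phiGen, Matrix.cons_val, delta_eq, conjGen]
    group
  · simp only [map_mul, map_inv, lift_phiGen_tF, mul_inv_eq_one]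
    exact gen_commute_of_chain (by omega) (by omega) (by omega) (by omega)
  · simp only [map_mul, map_inv, lift_phiGen_tF, mul_inv_eq_one, hij]
    exact (gen_braid (by omega) (by omega))
  · simp only [map_mul, map_inv, lift_phiGen_uF, lift_phiGen_tF, mul_inv_eq_one]
    exact phiGen_commute_gen i (k := j) (by omega) (by omega)
  · simp only [map_mul, map_inv, lift_phiGen_uF, lift_phiGen_tF, mul_inv_eq_one]
    exact braid4_phiGen hn i
  · simp only [map_mul, map_inv, lift_phiGen_uF, lift_phiGen_tF, mul_inv_eq_one]
    simpa only [mul_assoc] using (phiGen_commute_conj hn hij).eq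

end Phi

section Psi

variable {n : ℕ}

noncomputable def psiVal (n v : ℕ) : PresentedGroup (surfRels4 n) :=
  if v = 0 then uGen n 1
  else if v < n then tGen n v
  else if v = n then conjT n (uGen n 2) (n - 1)
  else conjT n (uGen n 3) (n - 1)

noncomputable def psiGen (n : ℕ) (i : Fin (n + 2)) : PresentedGroup (surfRels4 n) := psiVal n i

theorem lift_psiGen_gC (i : Fin (n + 2)) : FreeGroup.lift (psiGen n) (gC n i) = psiVal n i :=
  FreeGroup.lift_apply_of

@[simp] theorem psiVal_zero : psiVal n 0 = uGen n 1 := if_pos rfl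

theorem psiVal_of_lt {v : ℕ} (hv1 : 1 ≤ v) (hv : v < n) : psiVal n v = tGen n v := by
  simp [psiVal, hv, show v ≠ 0 by omega]

theorem psiVal_self (hn : 1 ≤ n) : psiVal n n = conjT n (uGen n 2) (n - 1) := by
  simp [psiVal, show n ≠ 0 by omega]

theorem psiVal_succ_self : psiVal n (n + 1) = conjT n (uGen n 3) (n - 1) := by
  simp [psiVal]

theorem psiVal_puncture {v : ℕ} (hn : 1 ≤ n) (hv : v = n ∨ v = n + 1) :
    ∃ i : Fin 4, 1 < i ∧ psiVal n v = conjT n (uGen n i) (n - 1) := by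
  rcases hv with rfl | rfl
  · exact ⟨2, by decide, psiVal_self hn⟩
  · exact ⟨3, by decide, psiVal_succ_self⟩

theorem psiVal_commute_of_chain {i j : ℕ} (hi : i ≤ n - 1) (hj : j ≤ n - 1) (hij : i ≠ j + 1)
    (hji : j ≠ i + 1) : Commute (psiVal n i) (psiVal n j) := by
  rcases eq_or_ne i j with rfl | hne
  · exact .refl _
  rcases Nat.eq_zero_or_pos i with rfl | hi1
  · rw [psiVal_zero, psiVal_of_lt (by omega) (by omega)]
    exact uGen_commute_tGen 1 (by omega) hj
  rcases Nat.eq_zero_or_pos j with rfl | hj1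
  · rw [psiVal_zero, psiVal_of_lt hi1 (by omega)]
    exact (uGen_commute_tGen 1 (by omega) hi).symm
  rw [psiVal_of_lt hi1 (by omega), psiVal_of_lt hj1 (by omega)]
  exact tGen_commute hi1 hi hj1 hj (by omega)

theorem psiVal_puncture_commute (hn : 2 ≤ n) {i j : ℕ} (hi : i = n ∨ i = n + 1)
    (hj : j ≤ n - 2) : Commute (psiVal n i) (psiVal n j) := by
  obtain ⟨k, hk, hv⟩ := psiVal_puncture (by omega) hi
  rw [hv]
  rcases Nat.eq_zero_or_pos j with rfl | hj1
  · rw [psiVal_zero]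
    exact conjT_uGen_commute_uGen_one hn hk (by omega) le_rfl
  · rw [psiVal_of_lt hj1 (by omega)]
    exact conjT_uGen_commute_tGen_of_lt k hj1 (by omega) le_rfl

theorem braid4_psiVal (hn : 2 ≤ n) {i j : ℕ}
    (h : (i = 0 ∧ j = 1) ∨ (i = n ∧ j = n - 1) ∨ (i = n + 1 ∧ j = n - 1)) :
    Braid4 (psiVal n i) (psiVal n j) := by
  rcases h with ⟨rfl, rfl⟩ | ⟨hi, rfl⟩ | ⟨hi, rfl⟩
  · rw [psiVal_zero, psiVal_of_lt le_rfl (by omega)]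
    exact braid4_uGen_tGen_one hn 1
  all_goals
    obtain ⟨k, -, hv⟩ := psiVal_puncture (n := n) (v := i) (by omega) (by omega)
    rw [hv, psiVal_of_lt (by omega) (by omega)]
    exact braid4_conjT_uGen hn k

theorem psiVal_x_relation (hn : 2 ≤ n) :
    Commute (psiVal n (n + 1)) (psiVal n (n - 1) * psiVal n n * (psiVal n (n - 1))⁻¹) := by
  have h := conjT_uGen_commute_conjT_uGen hn (i := 2) (j := 3) (by decide) (k := n - 2) le_rfl
  have e := conjT_succ (uGen n 2) (n - 2)
  rw [show n - 2 + 1 = n - 1 by omega] at h e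
  rw [psiVal_succ_self, psiVal_self (by omega), psiVal_of_lt (by omega) (by omega), e]
  simpa only [mul_assoc, mul_inv_cancel, mul_one, mul_inv_cancel_left] using h.symm

theorem psiGen_rels (hn : 2 ≤ n) : ∀ r ∈ artinRelsC n, FreeGroup.lift (psiGen n) r = 1 := by
  rintro r ((((⟨i, j, hi, hj, hij, hji, rfl⟩ | ⟨i, j, hi, hj, rfl⟩) | ⟨i, j, hj, hij, hi, rfl⟩) |
    ⟨i, j, h, rfl⟩) | rfl)
  · simp only [map_mul, map_inv, lift_psiGen_gC, mul_inv_eq_one]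
    exact psiVal_commute_of_chain hi hj hij hji
  · simp only [map_mul, map_inv, lift_psiGen_gC, mul_inv_eq_one]
    exact psiVal_puncture_commute hn hi hj
  · simp only [map_mul, map_inv, lift_psiGen_gC, mul_inv_eq_one, hij]
    rw [psiVal_of_lt hj (by omega), psiVal_of_lt (by omega) (by omega)]
    exact (tGen_braid hj (by omega)).symm
  · simp only [map_mul, map_inv, map_pow, lift_psiGen_gC, mul_inv_eq_one]
    exact braid4_iff_sq.1 (braid4_psiVal hn h)
  · simp only [map_mul, map_inv, lift_psiGen_gC, mul_inv_eq_one]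
    simpa only [mul_assoc] using (psiVal_x_relation hn).eq.symm

end Psi

section Isomorphism

variable {n : ℕ} (hn : 2 ≤ n)

noncomputable def phi : PresentedGroup (surfRels4 n) →* PresentedGroup (artinRelsC n) :=
  PresentedGroup.toGroup (phiGen_rels hn)

noncomputable def psi : PresentedGroup (artinRelsC n) →* PresentedGroup (surfRels4 n) :=
  PresentedGroup.toGroup (psiGen_rels hn)

theorem phi_of (x : Fin 4 ⊕ Fin (n - 1)) : phi hn (.of x) = phiGen n x :=
  PresentedGroup.toGroup.of _

theorem phi_tGen {v : ℕ} (hv1 : 1 ≤ v) (hv : v ≤ n - 1) : phi hn (tGen n v) = gen n v := by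
  rw [tGen, dif_pos ⟨hv1, by omega⟩, phi_of, phiGen, Nat.sub_add_cancel hv1]

theorem psi_gen {v : ℕ} (hv : v < n + 2) : psi hn (gen n v) = psiVal n v := by
  rw [gen, dif_pos hv]
  exact PresentedGroup.toGroup.of _

theorem phi_ascProd_tGen : phi hn (ascProd (tGen n) 1 (n - 1)) = ascProd (gen n) 1 (n - 1) := by
  rw [map_ascProd]
  exact ascProd_congr fun v h1 h2 => phi_tGen hn h1 (by omega)

theorem psi_ascProd_gen : psi hn (ascProd (gen n) 1 (n - 1)) = ascProd (tGen n) 1 (n - 1) := by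
  rw [map_ascProd]
  exact ascProd_congr fun v h1 h2 => (psi_gen hn (by omega)).trans (psiVal_of_lt h1 (by omega))

theorem psi_descProd_gen : psi hn (descProd (gen n) 1 (n - 1)) = descProd (tGen n) 1 (n - 1) := by
  rw [map_descProd]
  exact descProd_congr fun v h1 h2 => (psi_gen hn (by omega)).trans (psiVal_of_lt h1 (by omega))

theorem psi_delta : psi hn (delta n) = (uGen n 0)⁻¹ := by
  refine eq_inv_of_mul_eq_one_right ?_
  rw [delta_eq, map_mul, map_mul, map_mul, map_mul, psi_ascProd_gen, psi_descProd_gen,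
    psi_gen hn (by omega), psi_gen hn (by omega), psi_gen hn (by omega), psiVal_zero,
    psiVal_self (by omega), psiVal_succ_self, ← uGen_mul_tGen_prod_eq_one, conjT, conjT]
  group

theorem psi_conjGen_one {m : ℕ} (hm : m < n + 2) :
    psi hn (conjGen n 1 m) =
      ascProd (tGen n) 1 (n - 1) * psiVal n m * (ascProd (tGen n) 1 (n - 1))⁻¹ := by
  rw [conjGen, map_mul, map_mul, map_inv, psi_ascProd_gen, psi_gen hn hm]

theorem phi_conjT (x : PresentedGroup (surfRels4 n)) :
    phi hn (conjT n x (n - 1)) =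
      (ascProd (gen n) 1 (n - 1))⁻¹ * phi hn x * ascProd (gen n) 1 (n - 1) := by
  rw [conjT, map_mul, map_mul, map_inv, phi_ascProd_tGen]

theorem psi_comp_phi : (psi hn).comp (phi hn) = MonoidHom.id _ := by
  refine PresentedGroup.ext fun x => ?_
  rw [MonoidHom.comp_apply, phi_of, MonoidHom.id_apply]
  rcases x with i | j
  · fin_cases i
    · exact (map_inv _ _).trans ((congrArg _ (psi_delta hn)).trans (inv_inv _))
    · exact (psi_gen hn (by omega)).trans psiVal_zero
    · show psi hn (conjGen n 1 n) = uGen n 2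
      rw [psi_conjGen_one hn (by omega), psiVal_self (by omega), conjT]
      group
    · show psi hn (conjGen n 1 (n + 1)) = uGen n 3
      rw [psi_conjGen_one hn (by omega), psiVal_succ_self, conjT]
      group
  · rw [phiGen, psi_gen hn (by omega), psiVal_of_lt (by omega) (by omega)]
    exact (mk_tF j).symm

theorem phi_comp_psi : (phi hn).comp (psi hn) = MonoidHom.id _ := by
  refine PresentedGroup.ext fun i => ?_
  rw [MonoidHom.comp_apply, MonoidHom.id_apply, ← SC, SC_eq_gen, psi_gen hn i.isLt]
  obtain ⟨v, hv⟩ := i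
  show phi hn (psiVal n v) = gen n v
  rcases Nat.eq_zero_or_pos v with rfl | hv1
  · rw [psiVal_zero]
    exact phi_of hn (.inl 1)
  rcases Nat.lt_or_ge v n with hvn | hvn
  · rw [psiVal_of_lt hv1 hvn, phi_tGen hn hv1 (by omega)]
  obtain h | h : v = n ∨ v = n + 1 := by omega
  all_goals subst v
  · rw [psiVal_self (by omega), phi_conjT, uGen, phi_of]
    show _ * conjGen n 1 n * _ = _
    rw [conjGen]
    group
  · rw [psiVal_succ_self, phi_conjT, uGen, phi_of]
    show _ * conjGen n 1 (n + 1) * _ = _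
    rw [conjGen]
    group

end Isomorphism

end G21Braid

open G21Braid

/-- The braid theorem for `[G(2,1,n)]₁^α`, `n ≥ 2`: the assignments
`u₁ ↦ (s₁⋯s_{n+2}sₙ⋯s₂)⁻¹`, `u₂ ↦ s₁`, `u₃ ↦ 𝐬s_{n+1}𝐬⁻¹`, `u₄ ↦ 𝐬s_{n+2}𝐬⁻¹`,
`tᵢ ↦ s_{i+1}` (with `𝐬 = s₂⋯sₙ`) define an isomorphism from `π₁(UCₙ(Σ_{0,4}))` to the
Artin group `Ar([G(2,1,n)]₁^α)`. -/
theorem stmt17 (n : ℕ) (hn : 2 ≤ n) :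
    ∃ e : PresentedGroup (surfRels4 n) ≃* PresentedGroup (artinRelsC n),
      e (PresentedGroup.of (Sum.inl 0)) = (ascSC n 0 (n + 1) * descSC n 1 (n - 1))⁻¹ ∧
      e (PresentedGroup.of (Sum.inl 1)) = SC n ⟨0, by omega⟩ ∧
      e (PresentedGroup.of (Sum.inl 2)) =
        ascSC n 1 (n - 1) * SC n ⟨n, by omega⟩ * (ascSC n 1 (n - 1))⁻¹ ∧
      e (PresentedGroup.of (Sum.inl 3)) =
        ascSC n 1 (n - 1) * SC n ⟨n + 1, by omega⟩ * (ascSC n 1 (n - 1))⁻¹ ∧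
      ∀ j : Fin (n - 1), e (PresentedGroup.of (Sum.inr j)) =
        SC n ⟨j.val + 1, by have := j.isLt; omega⟩ := by
  refine ⟨(phi hn).toMulEquiv (psi hn) (psi_comp_phi hn) (phi_comp_psi hn),
    ?_, ?_, ?_, ?_, fun j => ?_⟩ <;> simp only [MonoidHom.toMulEquiv_apply, phi_of]
  · exact congrArg _ (ascSC_mul_descSC (by omega)).symm
  · exact (SC_eq_gen (n := n) ⟨0, _⟩).symm
  · exact conjGen_one_eq (by omega) _
  · exact conjGen_one_eq (by omega) _
  · exact (SC_eq_gen (n := n) ⟨j + 1, _⟩).symm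
end
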